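/- arXiv:2412.03120 — 6 statements merged into one kernel-verified Lean document; each statement's English description precedes it below -/
import Mathlib

section
/- With the fixed initial vectors, write L_n := L(ε·log u^(n,1), ε·log u^(n,2), ε·log u^(n,3)) (entrywise logarithm). Then for every n ∈ ℕ: L_{n+1} − L_n = ε·(KL(a ‖ P^(n,1) r_n) + KL(b ‖ (P^(n,2))ᵀ(1/r_n))), where r_n := ((P^(n,2)1_{m3}) / ((P^(n,1))ᵀ1_{m1}))^{1/2} ∈ ℝ_+^{m2} with quotient and square root entrywise; in particular L_{n+1} − L_n ≥ 0. -/
open Matrix Finset Real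

noncomputable section

/-- The Hilbert projective (pseudo)metric on the positive orthant:
`d_H(u,v) = log((max_i u_i/v_i) · (max_j v_j/u_j))`. -/
def dH {m : ℕ} (u v : Fin m → ℝ) : ℝ :=
  Real.log ((⨆ i, u i / v i) * (⨆ j, v j / u j))

/-- Birkhoff's ratio `γ(A) = max_{i,j,k,l} (A_{ik}A_{jl})/(A_{jk}A_{il})`. -/
def birkhoffGamma {n m : ℕ} (A : Matrix (Fin n) (Fin m) ℝ) : ℝ :=
  ⨆ p : (Fin n × Fin n) × Fin m × Fin m,
    A p.1.1 p.2.1 * A p.1.2 p.2.2 / (A p.1.2 p.2.1 * A p.1.1 p.2.2)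

/-- Birkhoff's contraction coefficient `λ(A) = (√γ(A) − 1)/(√γ(A) + 1)`. -/
def birkhoffLambda {n m : ℕ} (A : Matrix (Fin n) (Fin m) ℝ) : ℝ :=
  (Real.sqrt (birkhoffGamma A) - 1) / (Real.sqrt (birkhoffGamma A) + 1)

/-- The dual (Lagrangian) function for the sequentially composed OT problem with `M = 2`. -/
def dual2 {m1 m2 m3 : ℕ} (a : Fin m1 → ℝ) (b : Fin m3 → ℝ) (ε : ℝ)
    (C1 : Matrix (Fin m1) (Fin m2) ℝ) (C2 : Matrix (Fin m2) (Fin m3) ℝ)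
    (f1 : Fin m1 → ℝ) (f2 : Fin m2 → ℝ) (f3 : Fin m3 → ℝ) : ℝ :=
  (∑ j, f1 j * a j) + (∑ l, f3 l * b l)
    - ε * ((∑ j, ∑ k, Real.exp ((f1 j - f2 k - C1 j k) / ε))
      + ∑ k, ∑ l, Real.exp ((f2 k + f3 l - C2 k l) / ε))

/-- The matrix `diag(u) K diag(1/v)` induced by the first pair of Sinkhorn vectors. -/
def indMat1 {m1 m2 : ℕ} (u : Fin m1 → ℝ) (K : Matrix (Fin m1) (Fin m2) ℝ)
    (v : Fin m2 → ℝ) : Matrix (Fin m1) (Fin m2) ℝ :=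
  Matrix.diagonal u * K * Matrix.diagonal (fun k => (v k)⁻¹)

/-- The matrix `diag(v) K diag(w)` induced by the second pair of Sinkhorn vectors. -/
def indMat2 {m2 m3 : ℕ} (v : Fin m2 → ℝ) (K : Matrix (Fin m2) (Fin m3) ℝ)
    (w : Fin m3 → ℝ) : Matrix (Fin m2) (Fin m3) ℝ :=
  Matrix.diagonal v * K * Matrix.diagonal w

/-- Kullback–Leibler divergence `KL(c‖d) = Σ_j c_j log(c_j/d_j)`. -/
def KLdiv {m : ℕ} (c d : Fin m → ℝ) : ℝ := ∑ j, c j * Real.log (c j / d j)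

lemma klAux {c d : ℝ} (hc : 0 < c) (hd : 0 < d) : c - d ≤ c * Real.log (c / d) := by
  have h3 : Real.log (c / d) = - Real.log (d / c) := by rw [← Real.log_inv, inv_div]
  rw [h3, mul_neg]
  have h2 : c * Real.log (d / c) ≤ c * (d / c - 1) :=
    mul_le_mul_of_nonneg_left (Real.log_le_sub_one_of_pos (div_pos hd hc)) hc.le
  have h4 : c * (d / c - 1) = d - c := by field_simp
  linarith

lemma KL_lb {m : ℕ} (c d : Fin m → ℝ) (hc : ∀ j, 0 < c j) (hd : ∀ j, 0 < d j) :
    (∑ j, c j) - (∑ j, d j) ≤ KLdiv c d := by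
  rw [KLdiv, ← Finset.sum_sub_distrib]
  exact Finset.sum_le_sum fun j _ => klAux (hc j) (hd j)

/-- **Dual increase of one Sinkhorn step** (Lem. 4.2): with the fixed initial vectors, the
increase of the dual value equals `ε(KL(a‖P^{n,1}r_n) + KL(b‖(P^{n,2})ᵀ(1/r_n)))`, and in
particular is nonnegative. -/
theorem sinkhorn_dual_increase_eq_KL
    {m1 m2 m3 : ℕ} (hm1 : 0 < m1) (hm2 : 0 < m2) (hm3 : 0 < m3)
    (C1 : Matrix (Fin m1) (Fin m2) ℝ) (C2 : Matrix (Fin m2) (Fin m3) ℝ)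
    (hC1 : ∀ j k, 0 ≤ C1 j k) (hC2 : ∀ k l, 0 ≤ C2 k l)
    (a : Fin m1 → ℝ) (b : Fin m3 → ℝ)
    (ha : ∀ j, 0 < a j) (hb : ∀ l, 0 < b l)
    (hasum : ∑ j, a j = 1) (hbsum : ∑ l, b l = 1)
    (ε : ℝ) (hε : 0 < ε)
    (K1 : Matrix (Fin m1) (Fin m2) ℝ) (K2 : Matrix (Fin m2) (Fin m3) ℝ)
    (hK1 : ∀ j k, K1 j k = Real.exp (-C1 j k / ε))
    (hK2 : ∀ k l, K2 k l = Real.exp (-C2 k l / ε))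
    (u1 : ℕ → Fin m1 → ℝ) (u2 : ℕ → Fin m2 → ℝ) (u3 : ℕ → Fin m3 → ℝ)
    (hinit1 : u1 0 = fun _ => 1 / (∑ j, ∑ k, K1 j k))
    (hinit2 : u2 0 = fun _ => 1)
    (hinit3 : u3 0 = fun _ => 1 / (∑ k, ∑ l, K2 k l))
    (hrec2 : ∀ n, u2 (n+1) = fun k => Real.sqrt ((K1ᵀ *ᵥ u1 n) k / (K2 *ᵥ u3 n) k))
    (hrec1 : ∀ n, u1 (n+1) = fun j => a j / (K1 *ᵥ fun k => (u2 (n+1) k)⁻¹) j)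
    (hrec3 : ∀ n, u3 (n+1) = fun l => b l / (K2ᵀ *ᵥ u2 (n+1)) l)
    (Lseq : ℕ → ℝ)
    (hL : ∀ n, Lseq n = dual2 a b ε C1 C2 (fun j => ε * Real.log (u1 n j))
      (fun k => ε * Real.log (u2 n k)) (fun l => ε * Real.log (u3 n l)))
    (r : ℕ → Fin m2 → ℝ)
    (hr : ∀ n, r n = fun k => Real.sqrt
      (((indMat2 (u2 n) K2 (u3 n)) *ᵥ fun _ => 1) k /
        (((indMat1 (u1 n) K1 (u2 n))ᵀ *ᵥ fun _ => 1) k))) :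
    ∀ n : ℕ,
      Lseq (n+1) - Lseq n =
        ε * (KLdiv a (indMat1 (u1 n) K1 (u2 n) *ᵥ r n)
          + KLdiv b ((indMat2 (u2 n) K2 (u3 n))ᵀ *ᵥ fun k => (r n k)⁻¹)) ∧
      0 ≤ Lseq (n+1) - Lseq n := by
  have hne1 : (Finset.univ : Finset (Fin m1)).Nonempty := ⟨⟨0, hm1⟩, Finset.mem_univ _⟩
  have hne2 : (Finset.univ : Finset (Fin m2)).Nonempty := ⟨⟨0, hm2⟩, Finset.mem_univ _⟩
  have hne3 : (Finset.univ : Finset (Fin m3)).Nonempty := ⟨⟨0, hm3⟩, Finset.mem_univ _⟩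
  have hK1pos : ∀ j k, 0 < K1 j k := fun j k => by rw [hK1]; exact Real.exp_pos _
  have hK2pos : ∀ k l, 0 < K2 k l := fun k l => by rw [hK2]; exact Real.exp_pos _
  have pos1 : ∀ (v : Fin m2 → ℝ), (∀ k, 0 < v k) → ∀ j, 0 < (K1 *ᵥ v) j := by
    intro v hv j
    simp only [Matrix.mulVec, dotProduct]
    exact Finset.sum_pos (fun k _ => mul_pos (hK1pos j k) (hv k)) hne2
  have pos1T : ∀ (v : Fin m1 → ℝ), (∀ j, 0 < v j) → ∀ k, 0 < (K1ᵀ *ᵥ v) k := by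
    intro v hv k
    simp only [Matrix.mulVec, dotProduct, Matrix.transpose_apply]
    exact Finset.sum_pos (fun j _ => mul_pos (hK1pos j k) (hv j)) hne1
  have pos2 : ∀ (v : Fin m3 → ℝ), (∀ l, 0 < v l) → ∀ k, 0 < (K2 *ᵥ v) k := by
    intro v hv k
    simp only [Matrix.mulVec, dotProduct]
    exact Finset.sum_pos (fun l _ => mul_pos (hK2pos k l) (hv l)) hne3
  have pos2T : ∀ (v : Fin m2 → ℝ), (∀ k, 0 < v k) → ∀ l, 0 < (K2ᵀ *ᵥ v) l := by
    intro v hv l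
    simp only [Matrix.mulVec, dotProduct, Matrix.transpose_apply]
    exact Finset.sum_pos (fun k _ => mul_pos (hK2pos k l) (hv k)) hne2
  have hT1 : 0 < ∑ j, ∑ k, K1 j k :=
    Finset.sum_pos (fun j _ => Finset.sum_pos (fun k _ => hK1pos j k) hne2) hne1
  have hT2 : 0 < ∑ k, ∑ l, K2 k l :=
    Finset.sum_pos (fun k _ => Finset.sum_pos (fun l _ => hK2pos k l) hne3) hne2
  have hupos : ∀ n, (∀ j, 0 < u1 n j) ∧ (∀ k, 0 < u2 n k) ∧ (∀ l, 0 < u3 n l) := by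
    intro n
    induction n with
    | zero =>
      refine ⟨fun j => ?_, fun k => ?_, fun l => ?_⟩
      · simp only [hinit1]; exact div_pos one_pos hT1
      · simp only [hinit2]; exact one_pos
      · simp only [hinit3]; exact div_pos one_pos hT2
    | succ n ih =>
      obtain ⟨h1, h2, h3⟩ := ih
      have h2' : ∀ k, 0 < u2 (n+1) k := by
        intro k; simp only [hrec2]
        exact Real.sqrt_pos.mpr (div_pos (pos1T _ h1 k) (pos2 _ h3 k))
      refine ⟨fun j => ?_, h2', fun l => ?_⟩
      · simp only [hrec1]
        exact div_pos (ha j) (pos1 _ (fun k => inv_pos.mpr (h2' k)) j)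
      · simp only [hrec3]
        exact div_pos (hb l) (pos2T _ h2' l)
  have hP1e : ∀ n j k, indMat1 (u1 n) K1 (u2 n) j k = u1 n j * K1 j k * (u2 n k)⁻¹ := by
    intro n j k
    simp [indMat1, Matrix.mul_diagonal, Matrix.diagonal_mul]
  have hP2e : ∀ n k l, indMat2 (u2 n) K2 (u3 n) k l = u2 n k * K2 k l * u3 n l := by
    intro n k l
    simp [indMat2, Matrix.mul_diagonal, Matrix.diagonal_mul]
  -- Fact A: value of the dual along the iteration
  have hLval : ∀ n, Lseq n =
      ε * ((∑ j, a j * Real.log (u1 n j)) + (∑ l, b l * Real.log (u3 n l)))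
      - ε * ((∑ j, ∑ k, u1 n j * K1 j k * (u2 n k)⁻¹)
        + (∑ k, ∑ l, u2 n k * K2 k l * u3 n l)) := by
    intro n
    obtain ⟨h1, h2, h3⟩ := hupos n
    rw [hL]
    simp only [dual2]
    have e1 : ∀ j k, Real.exp ((ε * Real.log (u1 n j) - ε * Real.log (u2 n k) - C1 j k) / ε)
        = u1 n j * K1 j k * (u2 n k)⁻¹ := by
      intro j k
      rw [hK1]
      rw [show (ε * Real.log (u1 n j) - ε * Real.log (u2 n k) - C1 j k) / ε
          = Real.log (u1 n j) + (-Real.log (u2 n k) + -C1 j k / ε) from by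
        field_simp; ring]
      rw [Real.exp_add, Real.exp_add, Real.exp_log (h1 j), Real.exp_neg, Real.exp_log (h2 k)]
      ring
    have e2 : ∀ k l, Real.exp ((ε * Real.log (u2 n k) + ε * Real.log (u3 n l) - C2 k l) / ε)
        = u2 n k * K2 k l * u3 n l := by
      intro k l
      rw [hK2]
      rw [show (ε * Real.log (u2 n k) + ε * Real.log (u3 n l) - C2 k l) / ε
          = Real.log (u2 n k) + (Real.log (u3 n l) + -C2 k l / ε) from by
        field_simp; ring]
      rw [Real.exp_add, Real.exp_add, Real.exp_log (h2 k), Real.exp_log (h3 l)]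
      ring
    have s1 : (∑ j, ∑ k, Real.exp ((ε * Real.log (u1 n j) - ε * Real.log (u2 n k) - C1 j k) / ε))
        = ∑ j, ∑ k, u1 n j * K1 j k * (u2 n k)⁻¹ :=
      Finset.sum_congr rfl fun j _ => Finset.sum_congr rfl fun k _ => e1 j k
    have s2 : (∑ k, ∑ l, Real.exp ((ε * Real.log (u2 n k) + ε * Real.log (u3 n l) - C2 k l) / ε))
        = ∑ k, ∑ l, u2 n k * K2 k l * u3 n l :=
      Finset.sum_congr rfl fun k _ => Finset.sum_congr rfl fun l _ => e2 k l
    rw [s1, s2]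
    have t1 : (∑ j, (ε * Real.log (u1 n j)) * a j) = ε * ∑ j, a j * Real.log (u1 n j) := by
      rw [Finset.mul_sum]; exact Finset.sum_congr rfl fun j _ => by ring
    have t3 : (∑ l, (ε * Real.log (u3 n l)) * b l) = ε * ∑ l, b l * Real.log (u3 n l) := by
      rw [Finset.mul_sum]; exact Finset.sum_congr rfl fun l _ => by ring
    rw [t1, t3]; ring
  -- Fact B: total mass of the induced kernels is 2
  have hS : ∀ n, (∑ j, ∑ k, u1 n j * K1 j k * (u2 n k)⁻¹)
      + (∑ k, ∑ l, u2 n k * K2 k l * u3 n l) = 2 := by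
    intro n
    cases n with
    | zero =>
      have e1 : (∑ j, ∑ k, u1 0 j * K1 j k * (u2 0 k)⁻¹) = 1 := by
        simp only [hinit1, hinit2, inv_one, mul_one, ← Finset.mul_sum]
        field_simp
      have e2 : (∑ k, ∑ l, u2 0 k * K2 k l * u3 0 l) = 1 := by
        simp only [hinit2, hinit3, one_mul, ← Finset.sum_mul]
        field_simp
      rw [e1, e2]; norm_num
    | succ n =>
      have h2' := (hupos (n+1)).2.1
      have e1 : (∑ j, ∑ k, u1 (n+1) j * K1 j k * (u2 (n+1) k)⁻¹) = ∑ j, a j := by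
        refine Finset.sum_congr rfl fun j _ => ?_
        have hD : 0 < (K1 *ᵥ fun k => (u2 (n+1) k)⁻¹) j :=
          pos1 _ (fun k => inv_pos.mpr (h2' k)) j
        have step : (∑ k, u1 (n+1) j * K1 j k * (u2 (n+1) k)⁻¹)
            = u1 (n+1) j * (K1 *ᵥ fun k => (u2 (n+1) k)⁻¹) j := by
          simp only [Matrix.mulVec, dotProduct, Finset.mul_sum]
          exact Finset.sum_congr rfl fun k _ => by ring
        rw [step]
        simp only [hrec1]
        exact div_mul_cancel₀ _ hD.ne'
      have e2 : (∑ k, ∑ l, u2 (n+1) k * K2 k l * u3 (n+1) l) = ∑ l, b l := by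
        rw [Finset.sum_comm]
        refine Finset.sum_congr rfl fun l _ => ?_
        have hE : 0 < (K2ᵀ *ᵥ u2 (n+1)) l := pos2T _ h2' l
        have step : (∑ k, u2 (n+1) k * K2 k l * u3 (n+1) l)
            = (K2ᵀ *ᵥ u2 (n+1)) l * u3 (n+1) l := by
          simp only [Matrix.mulVec, dotProduct, Matrix.transpose_apply, Finset.sum_mul]
          exact Finset.sum_congr rfl fun k _ => by ring
        rw [step]
        simp only [hrec3]
        rw [mul_div_assoc', mul_comm]
        exact mul_div_cancel_right₀ _ hE.ne'
      rw [e1, e2, hasum, hbsum]; norm_num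
  -- row/column sum formulas for the induced matrices
  have hA : ∀ n k, ((indMat2 (u2 n) K2 (u3 n)) *ᵥ fun _ => (1:ℝ)) k
      = u2 n k * (K2 *ᵥ u3 n) k := by
    intro n k
    simp only [Matrix.mulVec, dotProduct, mul_one, Finset.mul_sum]
    exact Finset.sum_congr rfl fun l _ => by rw [hP2e]; ring
  have hB : ∀ n k, ((indMat1 (u1 n) K1 (u2 n))ᵀ *ᵥ fun _ => (1:ℝ)) k
      = (K1ᵀ *ᵥ u1 n) k * (u2 n k)⁻¹ := by
    intro n k
    simp only [Matrix.mulVec, dotProduct, Matrix.transpose_apply, mul_one,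
      Finset.sum_mul]
    exact Finset.sum_congr rfl fun j _ => by rw [hP1e]; ring
  -- Fact C: r n = u2 n / u2 (n+1)
  have hrval : ∀ n k, r n k = u2 n k / u2 (n+1) k := by
    intro n k
    obtain ⟨h1, h2, h3⟩ := hupos n
    have hp : 0 < (K1ᵀ *ᵥ u1 n) k := pos1T _ h1 k
    have hq : 0 < (K2 *ᵥ u3 n) k := pos2 _ h3 k
    have ht : 0 < u2 n k := h2 k
    simp only [hr]
    rw [hA, hB]
    simp only [hrec2]
    rw [show u2 n k * (K2 *ᵥ u3 n) k / ((K1ᵀ *ᵥ u1 n) k * (u2 n k)⁻¹)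
        = (u2 n k)^2 * ((K2 *ᵥ u3 n) k / (K1ᵀ *ᵥ u1 n) k) from by field_simp]
    rw [Real.sqrt_mul (sq_nonneg _), Real.sqrt_sq ht.le]
    rw [show (K2 *ᵥ u3 n) k / (K1ᵀ *ᵥ u1 n) k
        = ((K1ᵀ *ᵥ u1 n) k / (K2 *ᵥ u3 n) k)⁻¹ from by rw [inv_div]]
    rw [Real.sqrt_inv]
    exact (div_eq_mul_inv _ _).symm
  -- Fact D
  have hd1 : ∀ n j, (indMat1 (u1 n) K1 (u2 n) *ᵥ r n) j = a j * u1 n j / u1 (n+1) j := by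
    intro n j
    obtain ⟨h1, h2, h3⟩ := hupos n
    have h2' := (hupos (n+1)).2.1
    have hD : 0 < (K1 *ᵥ fun k => (u2 (n+1) k)⁻¹) j :=
      pos1 _ (fun k => inv_pos.mpr (h2' k)) j
    have step : (indMat1 (u1 n) K1 (u2 n) *ᵥ r n) j
        = u1 n j * (K1 *ᵥ fun k => (u2 (n+1) k)⁻¹) j := by
      simp only [Matrix.mulVec, dotProduct, Finset.mul_sum]
      refine Finset.sum_congr rfl fun k _ => ?_
      rw [hP1e, hrval]
      have hk := (h2 k).ne'
      have hk' := (h2' k).ne'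
      field_simp
      try ring
    rw [step]
    simp only [hrec1]
    have hDne := hD.ne'
    have haj := (ha j).ne'
    field_simp
    try ring
  -- Fact E
  have hd2 : ∀ n l, ((indMat2 (u2 n) K2 (u3 n))ᵀ *ᵥ fun k => (r n k)⁻¹) l
      = b l * u3 n l / u3 (n+1) l := by
    intro n l
    obtain ⟨h1, h2, h3⟩ := hupos n
    have h2' := (hupos (n+1)).2.1
    have hE : 0 < (K2ᵀ *ᵥ u2 (n+1)) l := pos2T _ h2' l
    have step : ((indMat2 (u2 n) K2 (u3 n))ᵀ *ᵥ fun k => (r n k)⁻¹) l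
        = u3 n l * (K2ᵀ *ᵥ u2 (n+1)) l := by
      simp only [Matrix.mulVec, dotProduct, Matrix.transpose_apply, Finset.mul_sum]
      refine Finset.sum_congr rfl fun k _ => ?_
      rw [hP2e, hrval]
      have hk := (h2 k).ne'
      have hk' := (h2' k).ne'
      field_simp
      try ring
    rw [step]
    simp only [hrec3]
    have hEne := hE.ne'
    have hbl := (hb l).ne'
    field_simp
    try ring
  intro n
  obtain ⟨h1, h2, h3⟩ := hupos n
  obtain ⟨h1', h2', h3'⟩ := hupos (n+1)
  have hd1pos : ∀ j, 0 < (indMat1 (u1 n) K1 (u2 n) *ᵥ r n) j := by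
    intro j; rw [hd1]
    exact div_pos (mul_pos (ha j) (h1 j)) (h1' j)
  have hd2pos : ∀ l, 0 < ((indMat2 (u2 n) K2 (u3 n))ᵀ *ᵥ fun k => (r n k)⁻¹) l := by
    intro l; rw [hd2]
    exact div_pos (mul_pos (hb l) (h3 l)) (h3' l)
  have hKL1 : KLdiv a (indMat1 (u1 n) K1 (u2 n) *ᵥ r n)
      = ∑ j, a j * (Real.log (u1 (n+1) j) - Real.log (u1 n j)) := by
    rw [KLdiv]
    refine Finset.sum_congr rfl fun j _ => ?_
    rw [hd1]
    rw [show a j / (a j * u1 n j / u1 (n+1) j) = u1 (n+1) j / u1 n j from by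
      have := (ha j).ne'; have := (h1 j).ne'; have := (h1' j).ne'
      field_simp]
    rw [Real.log_div (h1' j).ne' (h1 j).ne']
  have hKL2 : KLdiv b ((indMat2 (u2 n) K2 (u3 n))ᵀ *ᵥ fun k => (r n k)⁻¹)
      = ∑ l, b l * (Real.log (u3 (n+1) l) - Real.log (u3 n l)) := by
    rw [KLdiv]
    refine Finset.sum_congr rfl fun l _ => ?_
    rw [hd2]
    rw [show b l / (b l * u3 n l / u3 (n+1) l) = u3 (n+1) l / u3 n l from by
      have := (hb l).ne'; have := (h3 l).ne'; have := (h3' l).ne'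
      field_simp]
    rw [Real.log_div (h3' l).ne' (h3 l).ne']
  have heq : Lseq (n+1) - Lseq n =
      ε * (KLdiv a (indMat1 (u1 n) K1 (u2 n) *ᵥ r n)
        + KLdiv b ((indMat2 (u2 n) K2 (u3 n))ᵀ *ᵥ fun k => (r n k)⁻¹)) := by
    rw [hLval (n+1), hLval n, hS (n+1), hS n, hKL1, hKL2]
    simp only [mul_sub, Finset.sum_sub_distrib]
    ring
  refine ⟨heq, ?_⟩
  rw [heq]
  apply mul_nonneg hε.le
  -- nonnegativity of the sum of the two KL terms
  have lb1 := KL_lb a (indMat1 (u1 n) K1 (u2 n) *ᵥ r n) ha hd1pos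
  have lb2 := KL_lb b ((indMat2 (u2 n) K2 (u3 n))ᵀ *ᵥ fun k => (r n k)⁻¹) hb hd2pos
  have hc1pos : ∀ k, 0 < ∑ j, indMat1 (u1 n) K1 (u2 n) j k := by
    intro k
    exact Finset.sum_pos (fun j _ => by
      rw [hP1e]; exact mul_pos (mul_pos (h1 j) (hK1pos j k)) (inv_pos.mpr (h2 k))) hne1
  have hc2pos : ∀ k, 0 < ∑ l, indMat2 (u2 n) K2 (u3 n) k l := by
    intro k
    exact Finset.sum_pos (fun l _ => by
      rw [hP2e]; exact mul_pos (mul_pos (h2 k) (hK2pos k l)) (h3 l)) hne3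
  have hrform : ∀ k, r n k = Real.sqrt ((∑ l, indMat2 (u2 n) K2 (u3 n) k l)
      / (∑ j, indMat1 (u1 n) K1 (u2 n) j k)) := by
    intro k
    simp only [hr]
    congr 1
    · simp [Matrix.mulVec, dotProduct, Matrix.transpose_apply]
  have hsum1 : (∑ j, (indMat1 (u1 n) K1 (u2 n) *ᵥ r n) j)
      = ∑ k, (∑ j, indMat1 (u1 n) K1 (u2 n) j k) * r n k := by
    calc (∑ j, (indMat1 (u1 n) K1 (u2 n) *ᵥ r n) j)
        = ∑ j, ∑ k, indMat1 (u1 n) K1 (u2 n) j k * r n k := by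
          simp [Matrix.mulVec, dotProduct]
      _ = ∑ k, ∑ j, indMat1 (u1 n) K1 (u2 n) j k * r n k := Finset.sum_comm
      _ = ∑ k, (∑ j, indMat1 (u1 n) K1 (u2 n) j k) * r n k := by
          simp [Finset.sum_mul]
  have hsum2 : (∑ l, ((indMat2 (u2 n) K2 (u3 n))ᵀ *ᵥ fun k => (r n k)⁻¹) l)
      = ∑ k, (∑ l, indMat2 (u2 n) K2 (u3 n) k l) * (r n k)⁻¹ := by
    calc (∑ l, ((indMat2 (u2 n) K2 (u3 n))ᵀ *ᵥ fun k => (r n k)⁻¹) l)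
        = ∑ l, ∑ k, indMat2 (u2 n) K2 (u3 n) k l * (r n k)⁻¹ := by
          simp [Matrix.mulVec, dotProduct, Matrix.transpose_apply]
      _ = ∑ k, ∑ l, indMat2 (u2 n) K2 (u3 n) k l * (r n k)⁻¹ := Finset.sum_comm
      _ = ∑ k, (∑ l, indMat2 (u2 n) K2 (u3 n) k l) * (r n k)⁻¹ := by
          simp [Finset.sum_mul]
  have key : ∀ k, (∑ j, indMat1 (u1 n) K1 (u2 n) j k) * r n k
      + (∑ l, indMat2 (u2 n) K2 (u3 n) k l) * (r n k)⁻¹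
      ≤ (∑ j, indMat1 (u1 n) K1 (u2 n) j k) + (∑ l, indMat2 (u2 n) K2 (u3 n) k l) := by
    intro k
    have hc1 := hc1pos k
    have hc2 := hc2pos k
    have htpos : 0 < r n k := by
      rw [hrform]; exact Real.sqrt_pos.mpr (div_pos hc2 hc1)
    have ht2 : r n k ^ 2 = (∑ l, indMat2 (u2 n) K2 (u3 n) k l)
        / (∑ j, indMat1 (u1 n) K1 (u2 n) j k) := by
      rw [hrform]; exact Real.sq_sqrt (div_nonneg hc2.le hc1.le)
    have hc2eq : (∑ l, indMat2 (u2 n) K2 (u3 n) k l)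
        = (∑ j, indMat1 (u1 n) K1 (u2 n) j k) * r n k ^ 2 := by
      rw [ht2]; field_simp
    rw [hc2eq]
    have hinv : (∑ j, indMat1 (u1 n) K1 (u2 n) j k) * r n k ^ 2 * (r n k)⁻¹
        = (∑ j, indMat1 (u1 n) K1 (u2 n) j k) * r n k := by
      field_simp
    rw [hinv]
    nlinarith [mul_nonneg hc1.le (sq_nonneg (1 - r n k))]
  have htot : (∑ k, (∑ j, indMat1 (u1 n) K1 (u2 n) j k))
      + (∑ k, (∑ l, indMat2 (u2 n) K2 (u3 n) k l)) = 2 := by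
    have p1 : (∑ k, (∑ j, indMat1 (u1 n) K1 (u2 n) j k))
        = ∑ j, ∑ k, u1 n j * K1 j k * (u2 n k)⁻¹ := by
      rw [Finset.sum_comm]
      exact Finset.sum_congr rfl fun j _ => Finset.sum_congr rfl fun k _ => hP1e n j k
    have p2 : (∑ k, (∑ l, indMat2 (u2 n) K2 (u3 n) k l))
        = ∑ k, ∑ l, u2 n k * K2 k l * u3 n l :=
      Finset.sum_congr rfl fun k _ => Finset.sum_congr rfl fun l _ => hP2e n k l
    rw [p1, p2]; exact hS n
  have hsums : (∑ j, (indMat1 (u1 n) K1 (u2 n) *ᵥ r n) j)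
      + (∑ l, ((indMat2 (u2 n) K2 (u3 n))ᵀ *ᵥ fun k => (r n k)⁻¹) l) ≤ 2 := by
    rw [hsum1, hsum2, ← Finset.sum_add_distrib]
    calc (∑ k, ((∑ j, indMat1 (u1 n) K1 (u2 n) j k) * r n k
          + (∑ l, indMat2 (u2 n) K2 (u3 n) k l) * (r n k)⁻¹))
        ≤ ∑ k, ((∑ j, indMat1 (u1 n) K1 (u2 n) j k)
          + (∑ l, indMat2 (u2 n) K2 (u3 n) k l)) :=
          Finset.sum_le_sum fun k _ => key k
      _ = 2 := by rw [Finset.sum_add_distrib]; exact htot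
  linarith [lb1, lb2, hsums, hasum, hbsum]
end
end

section
/- For every n ∈ ℕ define P'^(n,1) := diag(u^(n,1)) K^(1) diag(1/u^(n+1,2)) and P'^(n,2) := diag(u^(n+1,2)) K^(2) diag(u^(n,3)). Then: (i) (P'^(n,1))ᵀ1_{m1} = P'^(n,2)1_{m3}; (ii) P'^(n,1)1_{m2} = P^(n,1) r_n and (P'^(n,2))ᵀ1_{m2} = (P^(n,2))ᵀ(1/r_n), where r_n := ((P^(n,2)1_{m3}) / ((P^(n,1))ᵀ1_{m1}))^{1/2} (quotient and square root entrywise); and (iii) the sums of all entries of P'^(n,1) and of P'^(n,2) are each at most 1. -/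
/-! The half step only rescales the middle potential, from `u^(n,2)` to `u^(n+1,2) = u^(n,2) / r_n`,
so `P'^(n,1) = P^(n,1) diag(r_n)` and `P'^(n,2) = diag(1/r_n) P^(n,2)`; this gives (ii). Writing
`μ = (P^(n,1))ᵀ1` and `ν = P^(n,2)1` for the two marginals at the middle node, `r_n = √(ν/μ)` is
chosen so that both half-step matrices have the geometric mean `√μ √ν` as middle marginal, which
is (i). Each `P^(n,i)` has unit mass (by the marginal constraint fitted in the previous step, or by
the normalisation of the initial vectors), so Cauchy–Schwarz bounds the common mass
`∑ √μ √ν ≤ √(∑ μ) √(∑ ν) = 1`, which is (iii). -/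

open Matrix Finset Real

noncomputable section

namespace Real

theorem sqrt_div_mul_self {x : ℝ} (hx : 0 ≤ x) (y : ℝ) : √(y / x) * x = √x * √y := by
  rw [sqrt_div' y hx, div_mul_comm, div_sqrt, mul_comm]

theorem inv_sqrt_div_mul_self (x : ℝ) {y : ℝ} (hy : 0 ≤ y) : (√(y / x))⁻¹ * y = √x * √y := by
  rw [← sqrt_inv, inv_div, sqrt_div_mul_self hy, mul_comm]

theorem sqrt_mul_div_inv_mul {u : ℝ} (hu : 0 ≤ u) (A B : ℝ) :
    √(u * B / (u⁻¹ * A)) = u / √(A / B) := by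
  have h : u * B / (u⁻¹ * A) = u ^ 2 * (B / A) := by
    simp only [div_eq_mul_inv, mul_inv, inv_inv]; ring
  rw [h, sqrt_mul (sq_nonneg u), sqrt_sq hu, ← inv_div, sqrt_inv]
  exact (div_eq_mul_inv _ _).symm

end Real

namespace Matrix

variable {ι κ R : Type*} [CommSemiring R]

theorem sum_mulVec_one [Fintype ι] [Fintype κ] (M : Matrix ι κ R) :
    ∑ i, (M *ᵥ fun _ => 1) i = ∑ i, ∑ j, M i j := by
  simp [mulVec, dotProduct]

theorem sum_transpose_mulVec_one [Fintype ι] [Fintype κ] (M : Matrix ι κ R) :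
    ∑ j, (Mᵀ *ᵥ fun _ => 1) j = ∑ i, ∑ j, M i j := by
  simp only [mulVec, dotProduct, transpose_apply, mul_one]
  exact Finset.sum_comm

theorem diagonal_mul_mulVec_one [Fintype ι] [DecidableEq ι] [Fintype κ] (r : ι → R)
    (M : Matrix ι κ R) :
    (diagonal r * M) *ᵥ (fun _ => 1) = r * M *ᵥ fun _ => 1 := by
  ext i
  rw [← mulVec_mulVec, mulVec_diagonal]
  rfl

theorem mul_diagonal_mulVec_one [Fintype κ] [DecidableEq κ] (M : Matrix ι κ R) (r : κ → R) :
    (M * diagonal r) *ᵥ (fun _ => 1) = M *ᵥ r := by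
  ext i
  rw [← mulVec_mulVec]
  congr 1
  ext k
  rw [mulVec_diagonal, mul_one]

theorem diagonal_mul_mul_diagonal_mulVec_one
    [Fintype ι] [DecidableEq ι] [Fintype κ] [DecidableEq κ] (u : ι → R) (K : Matrix ι κ R)
    (v : κ → R) :
    (diagonal u * K * diagonal v) *ᵥ (fun _ => 1) = u * K *ᵥ v := by
  rw [Matrix.mul_assoc, diagonal_mul_mulVec_one, mul_diagonal_mulVec_one]

theorem transpose_diagonal_mul_mul_diagonal
    [Fintype ι] [DecidableEq ι] [Fintype κ] [DecidableEq κ] (u : ι → R) (K : Matrix ι κ R)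
    (v : κ → R) :
    (diagonal u * K * diagonal v)ᵀ = diagonal v * Kᵀ * diagonal u := by
  simp [transpose_mul, Matrix.mul_assoc]

theorem sum_sum_diagonal_mul_mul_diagonal
    [Fintype ι] [DecidableEq ι] [Fintype κ] [DecidableEq κ] (u : ι → R) (K : Matrix ι κ R)
    (v : κ → R) :
    ∑ i, ∑ j, (diagonal u * K * diagonal v) i j = u ⬝ᵥ K *ᵥ v := by
  rw [← sum_mulVec_one, diagonal_mul_mul_diagonal_mulVec_one]
  rfl

theorem diagonal_mul_mul_diagonal_nonneg
    [Fintype ι] [DecidableEq ι] [Fintype κ] [DecidableEq κ] [PartialOrder R] [IsOrderedRing R]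
    {u : ι → R} {K : Matrix ι κ R} {v : κ → R}
    (hu : ∀ i, 0 ≤ u i) (hK : ∀ i j, 0 ≤ K i j) (hv : ∀ j, 0 ≤ v j) (i : ι) (j : κ) :
    0 ≤ (diagonal u * K * diagonal v) i j := by
  rw [mul_diagonal, diagonal_mul]
  exact mul_nonneg (mul_nonneg (hu i) (hK i j)) (hv j)

theorem mulVec_pos {ι κ R : Type*} [Fintype κ] [Nonempty κ] [CommSemiring R] [PartialOrder R]
    [IsStrictOrderedRing R] {K : Matrix ι κ R} {v : κ → R} (hK : ∀ i j, 0 < K i j)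
    (hv : ∀ j, 0 < v j) (i : ι) : 0 < (K *ᵥ v) i :=
  Finset.sum_pos (fun j _ => mul_pos (hK i j) (hv j)) Finset.univ_nonempty

theorem sum_sum_pos {ι κ R : Type*} [Fintype ι] [Nonempty ι] [Fintype κ] [Nonempty κ]
    [AddCommMonoid R] [PartialOrder R] [IsOrderedCancelAddMonoid R] {K : Matrix ι κ R}
    (hK : ∀ i j, 0 < K i j) : 0 < ∑ i, ∑ j, K i j :=
  Finset.sum_pos (fun i _ => Finset.sum_pos (fun j _ => hK i j) Finset.univ_nonempty)
    Finset.univ_nonempty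

theorem div_dotProduct_self {ι K : Type*} [Fintype ι] [Field K] (a : ι → K) {d : ι → K}
    (hd : ∀ i, d i ≠ 0) : (fun i => a i / d i) ⬝ᵥ d = ∑ i, a i :=
  Finset.sum_congr rfl fun i _ => div_mul_cancel₀ (a i) (hd i)

end Matrix

section Balancing

variable {ι κ τ : Type*} [Fintype κ] [DecidableEq κ] {μ ν : κ → ℝ}

theorem transpose_mul_diagonal_sqrt_div_mulVec_one [Fintype ι] {P : Matrix ι κ ℝ}
    (hμ : (Pᵀ *ᵥ fun _ => 1) = μ) (hμ0 : ∀ k, 0 ≤ μ k) :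
    ((P * diagonal fun k => √(ν k / μ k))ᵀ *ᵥ fun _ => 1) = fun k => √(μ k) * √(ν k) := by
  rw [transpose_mul, diagonal_transpose, diagonal_mul_mulVec_one, hμ]
  exact funext fun k => Real.sqrt_div_mul_self (hμ0 k) _

theorem diagonal_inv_sqrt_div_mul_mulVec_one [Fintype τ] {Q : Matrix κ τ ℝ}
    (hν : (Q *ᵥ fun _ => 1) = ν) (hν0 : ∀ k, 0 ≤ ν k) :
    ((diagonal (fun k => (√(ν k / μ k))⁻¹) * Q) *ᵥ fun _ => 1) =
      fun k => √(μ k) * √(ν k) := by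
  rw [diagonal_mul_mulVec_one, hν]
  exact funext fun k => Real.inv_sqrt_div_mul_self _ (hν0 k)

theorem middle_marginals_eq_and_mass_le_one [Fintype ι] [Fintype τ] {P : Matrix ι κ ℝ}
    {Q : Matrix κ τ ℝ} (hP : ∀ i k, 0 ≤ P i k) (hQ : ∀ k t, 0 ≤ Q k t)
    (hP1 : ∑ i, ∑ k, P i k = 1) (hQ1 : ∑ k, ∑ t, Q k t = 1) {r : κ → ℝ}
    (hr : r = fun k => √((Q *ᵥ fun _ => 1) k / (Pᵀ *ᵥ fun _ => 1) k)) :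
    ((P * diagonal r)ᵀ *ᵥ fun _ => 1) = ((diagonal (fun k => (r k)⁻¹) * Q) *ᵥ fun _ => 1) ∧
      ∑ i, ∑ k, (P * diagonal r) i k ≤ 1 ∧
      ∑ k, ∑ t, (diagonal (fun k => (r k)⁻¹) * Q) k t ≤ 1 := by
  subst hr
  set μ := Pᵀ *ᵥ fun _ => 1 with hμ
  set ν := Q *ᵥ fun _ => 1 with hν
  have hμ0 : ∀ k, 0 ≤ μ k := fun k =>
    Finset.sum_nonneg fun i _ => mul_nonneg (hP i k) zero_le_one
  have hν0 : ∀ k, 0 ≤ ν k := fun k =>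
    Finset.sum_nonneg fun t _ => mul_nonneg (hQ k t) zero_le_one
  have hmid1 := transpose_mul_diagonal_sqrt_div_mulVec_one (ν := ν) hμ.symm hμ0
  have hmid2 := diagonal_inv_sqrt_div_mul_mulVec_one (μ := μ) hν.symm hν0
  have hmass : ∑ k, √(μ k) * √(ν k) ≤ 1 := by
    calc ∑ k, √(μ k) * √(ν k) ≤ √(∑ k, μ k) * √(∑ k, ν k) :=
          Real.sum_sqrt_mul_sqrt_le _ hμ0 hν0
      _ = 1 := by
        rw [hμ, hν, sum_transpose_mulVec_one, sum_mulVec_one, hP1, hQ1, sqrt_one, one_mul]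
  refine ⟨hmid1.trans hmid2.symm, ?_, ?_⟩
  · rw [← sum_transpose_mulVec_one, hmid1]
    exact hmass
  · rw [← sum_mulVec_one, hmid2]
    exact hmass

end Balancing

section Sinkhorn

variable {m1 m2 m3 : ℕ}

theorem indMat1_transpose_mulVec_one (u : Fin m1 → ℝ) (K : Matrix (Fin m1) (Fin m2) ℝ)
    (v : Fin m2 → ℝ) :
    ((indMat1 u K v)ᵀ *ᵥ fun _ => 1) = fun k => (v k)⁻¹ * (Kᵀ *ᵥ u) k := by
  rw [indMat1, transpose_diagonal_mul_mul_diagonal, diagonal_mul_mul_diagonal_mulVec_one]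
  rfl

theorem indMat2_mulVec_one (v : Fin m2 → ℝ) (K : Matrix (Fin m2) (Fin m3) ℝ) (w : Fin m3 → ℝ) :
    (indMat2 v K w *ᵥ fun _ => 1) = fun k => v k * (K *ᵥ w) k :=
  diagonal_mul_mul_diagonal_mulVec_one v K w

theorem sqrt_marginal_div_eq_div (u : Fin m1 → ℝ) (K1 : Matrix (Fin m1) (Fin m2) ℝ)
    {v : Fin m2 → ℝ} (K2 : Matrix (Fin m2) (Fin m3) ℝ) (w : Fin m3 → ℝ) {k : Fin m2}
    (hv : 0 ≤ v k) :
    √((indMat2 v K2 w *ᵥ fun _ => 1) k / ((indMat1 u K1 v)ᵀ *ᵥ fun _ => 1) k) =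
      v k / √((K1ᵀ *ᵥ u) k / (K2 *ᵥ w) k) := by
  rw [indMat2_mulVec_one, indMat1_transpose_mulVec_one, Real.sqrt_mul_div_inv_mul hv]

theorem indMat1_mul_diagonal_div (u : Fin m1 → ℝ) (K : Matrix (Fin m1) (Fin m2) ℝ)
    {v : Fin m2 → ℝ} (hv : ∀ k, v k ≠ 0) (w : Fin m2 → ℝ) :
    indMat1 u K v * diagonal (fun k => v k / w k) =
      diagonal u * K * diagonal (fun k => (w k)⁻¹) := by
  rw [indMat1, Matrix.mul_assoc, diagonal_mul_diagonal]
  congr 3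
  ext k
  rw [inv_mul_eq_div, div_div_cancel_left' (hv k)]

theorem diagonal_inv_div_mul_indMat2 {v : Fin m2 → ℝ} (hv : ∀ k, v k ≠ 0) (w : Fin m2 → ℝ)
    (K : Matrix (Fin m2) (Fin m3) ℝ) (x : Fin m3 → ℝ) :
    diagonal (fun k => (v k / w k)⁻¹) * indMat2 v K x = diagonal w * K * diagonal x := by
  rw [indMat2, ← Matrix.mul_assoc, ← Matrix.mul_assoc, diagonal_mul_diagonal]
  congr 3
  ext k
  rw [inv_div, div_mul_cancel₀ _ (hv k)]

variable {a : Fin m1 → ℝ} {b : Fin m3 → ℝ}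
  {K1 : Matrix (Fin m1) (Fin m2) ℝ} {K2 : Matrix (Fin m2) (Fin m3) ℝ}
  {u1 : ℕ → Fin m1 → ℝ} {u2 : ℕ → Fin m2 → ℝ} {u3 : ℕ → Fin m3 → ℝ}

theorem sinkhorn_potentials_pos [Nonempty (Fin m1)] [Nonempty (Fin m2)] [Nonempty (Fin m3)]
    (hK1 : ∀ j k, 0 < K1 j k) (hK2 : ∀ k l, 0 < K2 k l)
    (ha : ∀ j, 0 < a j) (hb : ∀ l, 0 < b l)
    (hinit1 : u1 0 = fun _ => 1 / (∑ j, ∑ k, K1 j k))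
    (hinit2 : u2 0 = fun _ => 1)
    (hinit3 : u3 0 = fun _ => 1 / (∑ k, ∑ l, K2 k l))
    (hrec2 : ∀ n, u2 (n+1) = fun k => Real.sqrt ((K1ᵀ *ᵥ u1 n) k / (K2 *ᵥ u3 n) k))
    (hrec1 : ∀ n, u1 (n+1) = fun j => a j / (K1 *ᵥ fun k => (u2 (n+1) k)⁻¹) j)
    (hrec3 : ∀ n, u3 (n+1) = fun l => b l / (K2ᵀ *ᵥ u2 (n+1)) l) (n : ℕ) :
    (∀ j, 0 < u1 n j) ∧ (∀ k, 0 < u2 n k) ∧ (∀ l, 0 < u3 n l) := by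
  induction n with
  | zero =>
    simp [hinit1, hinit2, hinit3, sum_sum_pos hK1, sum_sum_pos hK2]
  | succ n ih =>
    obtain ⟨h1, -, h3⟩ := ih
    have h2 : ∀ k, 0 < u2 (n+1) k := fun k => by
      rw [hrec2]
      exact Real.sqrt_pos.2 (div_pos (mulVec_pos (fun k j => hK1 j k) h1 k) (mulVec_pos hK2 h3 k))
    refine ⟨fun j => ?_, h2, fun l => ?_⟩
    · rw [hrec1]
      exact div_pos (ha j) (mulVec_pos hK1 (fun k => inv_pos.2 (h2 k)) j)
    · rw [hrec3]
      exact div_pos (hb l) (mulVec_pos (fun l k => hK2 k l) h2 l)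

theorem sum_sum_indMat1_eq_one [Nonempty (Fin m1)] [Nonempty (Fin m2)]
    (hK1 : ∀ j k, 0 < K1 j k) (hu2 : ∀ n k, 0 < u2 n k) (hasum : ∑ j, a j = 1)
    (hinit1 : u1 0 = fun _ => 1 / (∑ j, ∑ k, K1 j k))
    (hinit2 : u2 0 = fun _ => 1)
    (hrec1 : ∀ n, u1 (n+1) = fun j => a j / (K1 *ᵥ fun k => (u2 (n+1) k)⁻¹) j) :
    ∀ n, ∑ j, ∑ k, indMat1 (u1 n) K1 (u2 n) j k = 1
  | 0 => by
    rw [indMat1, sum_sum_diagonal_mul_mul_diagonal, hinit1, hinit2]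
    simp [dotProduct, mulVec, ← Finset.mul_sum, (sum_sum_pos hK1).ne']
  | n + 1 => by
    rw [indMat1, sum_sum_diagonal_mul_mul_diagonal, hrec1,
      div_dotProduct_self _ fun j => (mulVec_pos hK1 (fun k => inv_pos.2 (hu2 _ k)) j).ne', hasum]

theorem sum_sum_indMat2_eq_one [Nonempty (Fin m2)] [Nonempty (Fin m3)]
    (hK2 : ∀ k l, 0 < K2 k l) (hu2 : ∀ n k, 0 < u2 n k) (hbsum : ∑ l, b l = 1)
    (hinit2 : u2 0 = fun _ => 1)
    (hinit3 : u3 0 = fun _ => 1 / (∑ k, ∑ l, K2 k l))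
    (hrec3 : ∀ n, u3 (n+1) = fun l => b l / (K2ᵀ *ᵥ u2 (n+1)) l) :
    ∀ n, ∑ k, ∑ l, indMat2 (u2 n) K2 (u3 n) k l = 1
  | 0 => by
    rw [indMat2, sum_sum_diagonal_mul_mul_diagonal, hinit2, hinit3]
    simp [dotProduct, mulVec, ← Finset.sum_mul, (sum_sum_pos hK2).ne']
  | n + 1 => by
    rw [indMat2, sum_sum_diagonal_mul_mul_diagonal, dotProduct_mulVec, ← mulVec_transpose,
      dotProduct_comm, hrec3,
      div_dotProduct_self _ fun l => (mulVec_pos (K := K2ᵀ) (fun l k => hK2 k l) (hu2 _) l).ne',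
      hbsum]

end Sinkhorn
theorem sinkhorn_half_step_matrices_general
    {m1 m2 m3 : ℕ} (hm1 : 0 < m1) (hm2 : 0 < m2) (hm3 : 0 < m3)
    (C1 : Matrix (Fin m1) (Fin m2) ℝ) (C2 : Matrix (Fin m2) (Fin m3) ℝ)
    (a : Fin m1 → ℝ) (b : Fin m3 → ℝ)
    (ha : ∀ j, 0 < a j) (hb : ∀ l, 0 < b l)
    (hasum : ∑ j, a j = 1) (hbsum : ∑ l, b l = 1)
    (ε : ℝ)
    (K1 : Matrix (Fin m1) (Fin m2) ℝ) (K2 : Matrix (Fin m2) (Fin m3) ℝ)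
    (hK1 : ∀ j k, K1 j k = Real.exp (-C1 j k / ε))
    (hK2 : ∀ k l, K2 k l = Real.exp (-C2 k l / ε))
    (u1 : ℕ → Fin m1 → ℝ) (u2 : ℕ → Fin m2 → ℝ) (u3 : ℕ → Fin m3 → ℝ)
    (hinit1 : u1 0 = fun _ => 1 / (∑ j, ∑ k, K1 j k))
    (hinit2 : u2 0 = fun _ => 1)
    (hinit3 : u3 0 = fun _ => 1 / (∑ k, ∑ l, K2 k l))
    (hrec2 : ∀ n, u2 (n+1) = fun k => Real.sqrt ((K1ᵀ *ᵥ u1 n) k / (K2 *ᵥ u3 n) k))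
    (hrec1 : ∀ n, u1 (n+1) = fun j => a j / (K1 *ᵥ fun k => (u2 (n+1) k)⁻¹) j)
    (hrec3 : ∀ n, u3 (n+1) = fun l => b l / (K2ᵀ *ᵥ u2 (n+1)) l)
    (r : ℕ → Fin m2 → ℝ)
    (hr : ∀ n, r n = fun k => Real.sqrt
      (((indMat2 (u2 n) K2 (u3 n)) *ᵥ fun _ => 1) k /
        (((indMat1 (u1 n) K1 (u2 n))ᵀ *ᵥ fun _ => 1) k)))
    (P'1 : ℕ → Matrix (Fin m1) (Fin m2) ℝ) (P'2 : ℕ → Matrix (Fin m2) (Fin m3) ℝ)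
    (hP'1 : ∀ n, P'1 n = Matrix.diagonal (u1 n) * K1 * Matrix.diagonal (fun k => (u2 (n+1) k)⁻¹))
    (hP'2 : ∀ n, P'2 n = Matrix.diagonal (u2 (n+1)) * K2 * Matrix.diagonal (u3 n)) :
    ∀ n : ℕ,
      ((P'1 n)ᵀ *ᵥ fun _ => 1) = (P'2 n *ᵥ fun _ => 1) ∧
      (P'1 n *ᵥ fun _ => 1) = (indMat1 (u1 n) K1 (u2 n) *ᵥ r n) ∧
      ((P'2 n)ᵀ *ᵥ fun _ => 1) = ((indMat2 (u2 n) K2 (u3 n))ᵀ *ᵥ fun k => (r n k)⁻¹) ∧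
      (∑ j, ∑ k, P'1 n j k) ≤ 1 ∧ (∑ k, ∑ l, P'2 n k l) ≤ 1 := by
  have : Nonempty (Fin m1) := Fin.pos_iff_nonempty.1 hm1
  have : Nonempty (Fin m2) := Fin.pos_iff_nonempty.1 hm2
  have : Nonempty (Fin m3) := Fin.pos_iff_nonempty.1 hm3
  have hK1pos : ∀ j k, 0 < K1 j k := fun j k => hK1 j k ▸ exp_pos _
  have hK2pos : ∀ k l, 0 < K2 k l := fun k l => hK2 k l ▸ exp_pos _
  have hpos := sinkhorn_potentials_pos hK1pos hK2pos ha hb hinit1 hinit2 hinit3 hrec2 hrec1 hrec3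
  have hu2 : ∀ n k, 0 < u2 n k := fun n => (hpos n).2.1
  intro n
  obtain ⟨h1, h2, h3⟩ := hpos n
  have hrn : r n = fun k => u2 n k / u2 (n+1) k := by
    rw [hr, hrec2]
    exact funext fun k => sqrt_marginal_div_eq_div _ _ _ _ (h2 k).le
  have hP1 : P'1 n = indMat1 (u1 n) K1 (u2 n) * diagonal (r n) := by
    rw [hP'1, hrn, indMat1_mul_diagonal_div _ _ (fun k => (h2 k).ne')]
  have hP2 : P'2 n = diagonal (fun k => (r n k)⁻¹) * indMat2 (u2 n) K2 (u3 n) := by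
    rw [hP'2, hrn, diagonal_inv_div_mul_indMat2 (fun k => (h2 k).ne')]
  obtain ⟨hmid, hmass1, hmass2⟩ := middle_marginals_eq_and_mass_le_one
    (diagonal_mul_mul_diagonal_nonneg (fun j => (h1 j).le) (fun j k => (hK1pos j k).le)
      (fun k => (inv_pos.2 (h2 k)).le))
    (diagonal_mul_mul_diagonal_nonneg (fun k => (h2 k).le) (fun k l => (hK2pos k l).le)
      (fun l => (h3 l).le))
    (sum_sum_indMat1_eq_one hK1pos hu2 hasum hinit1 hinit2 hrec1 n)
    (sum_sum_indMat2_eq_one hK2pos hu2 hbsum hinit2 hinit3 hrec3 n) (hr n)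
  rw [hP1, hP2]
  exact ⟨hmid, mul_diagonal_mulVec_one _ _,
    by rw [transpose_mul, diagonal_transpose, mul_diagonal_mulVec_one], hmass1, hmass2⟩

/-- **Characterization of the intermediate (half-step) matrices** (Prop. 4.3):
`P'^{n,1} := diag(u^{n,1})K¹diag(1/u^{n+1,2})` and `P'^{n,2} := diag(u^{n+1,2})K²diag(u^{n,3})`
are consistent on the boundary, their edge marginals are `P^{n,1}r_n` and `(P^{n,2})ᵀ(1/r_n)`,
and their entries sum to at most `1`. -/
theorem sinkhorn_half_step_matrices
    {m1 m2 m3 : ℕ} (hm1 : 0 < m1) (hm2 : 0 < m2) (hm3 : 0 < m3)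
    (C1 : Matrix (Fin m1) (Fin m2) ℝ) (C2 : Matrix (Fin m2) (Fin m3) ℝ)
    (hC1 : ∀ j k, 0 ≤ C1 j k) (hC2 : ∀ k l, 0 ≤ C2 k l)
    (a : Fin m1 → ℝ) (b : Fin m3 → ℝ)
    (ha : ∀ j, 0 < a j) (hb : ∀ l, 0 < b l)
    (hasum : ∑ j, a j = 1) (hbsum : ∑ l, b l = 1)
    (ε : ℝ) (hε : 0 < ε)
    (K1 : Matrix (Fin m1) (Fin m2) ℝ) (K2 : Matrix (Fin m2) (Fin m3) ℝ)
    (hK1 : ∀ j k, K1 j k = Real.exp (-C1 j k / ε))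
    (hK2 : ∀ k l, K2 k l = Real.exp (-C2 k l / ε))
    (u1 : ℕ → Fin m1 → ℝ) (u2 : ℕ → Fin m2 → ℝ) (u3 : ℕ → Fin m3 → ℝ)
    (hinit1 : u1 0 = fun _ => 1 / (∑ j, ∑ k, K1 j k))
    (hinit2 : u2 0 = fun _ => 1)
    (hinit3 : u3 0 = fun _ => 1 / (∑ k, ∑ l, K2 k l))
    (hrec2 : ∀ n, u2 (n+1) = fun k => Real.sqrt ((K1ᵀ *ᵥ u1 n) k / (K2 *ᵥ u3 n) k))
    (hrec1 : ∀ n, u1 (n+1) = fun j => a j / (K1 *ᵥ fun k => (u2 (n+1) k)⁻¹) j)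
    (hrec3 : ∀ n, u3 (n+1) = fun l => b l / (K2ᵀ *ᵥ u2 (n+1)) l)
    (r : ℕ → Fin m2 → ℝ)
    (hr : ∀ n, r n = fun k => Real.sqrt
      (((indMat2 (u2 n) K2 (u3 n)) *ᵥ fun _ => 1) k /
        (((indMat1 (u1 n) K1 (u2 n))ᵀ *ᵥ fun _ => 1) k)))
    (P'1 : ℕ → Matrix (Fin m1) (Fin m2) ℝ) (P'2 : ℕ → Matrix (Fin m2) (Fin m3) ℝ)
    (hP'1 : ∀ n, P'1 n = Matrix.diagonal (u1 n) * K1 * Matrix.diagonal (fun k => (u2 (n+1) k)⁻¹))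
    (hP'2 : ∀ n, P'2 n = Matrix.diagonal (u2 (n+1)) * K2 * Matrix.diagonal (u3 n)) :
    ∀ n : ℕ,
      ((P'1 n)ᵀ *ᵥ fun _ => 1) = (P'2 n *ᵥ fun _ => 1) ∧
      (P'1 n *ᵥ fun _ => 1) = (indMat1 (u1 n) K1 (u2 n) *ᵥ r n) ∧
      ((P'2 n)ᵀ *ᵥ fun _ => 1) = ((indMat2 (u2 n) K2 (u3 n))ᵀ *ᵥ fun k => (r n k)⁻¹) ∧
      (∑ j, ∑ k, P'1 n j k) ≤ 1 ∧ (∑ k, ∑ l, P'2 n k l) ≤ 1 :=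
  sinkhorn_half_step_matrices_general hm1 hm2 hm3 C1 C2 a b ha hb hasum hbsum ε K1 K2 hK1 hK2 u1 u2
    u3 hinit1 hinit2 hinit3 hrec2 hrec1 hrec3 r hr P'1 P'2 hP'1 hP'2
end
end

section
/- With the fixed initial vectors, let (û^(1), û^(2), û^(3)) be a dual-optimal triple and let K := min_{j≤m1, l≤m3} Σ_{k≤m2} K^(1)_{jk} K^(2)_{kl}. Then L(ε·log û^(1), ε·log û^(2), ε·log û^(3)) − L(ε·log u^(0,1), ε·log u^(0,2), ε·log u^(0,3)) ≤ ε·log(‖K^(1)‖₁·‖K^(2)‖₁ / K). -/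
/-!
Perturbing a single coordinate of an optimal potential shows that the optimal plan has the
prescribed marginals: `∑ₖ exp((f¹ⱼ - f²ₖ - C¹ⱼₖ)/ε) = aⱼ` and `∑ₖ exp((f²ₖ + f³ₗ - C²ₖₗ)/ε) = bₗ`.
So at the optimum the exponential part of `L` equals `2ε`, and multiplying the two marginal
identities and keeping only the diagonal terms of the product of sums gives
`exp((f¹ⱼ + f³ₗ)/ε) · K ≤ aⱼ bₗ ≤ 1`, whence `⟨f¹, a⟩ + ⟨f³, b⟩ ≤ -ε log K`.
At the initial vectors the exponential part is `2ε` as well, and the linear part is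
`-ε log (‖K¹‖₁ ‖K²‖₁)`.
-/

open Matrix Finset Real

noncomputable section

theorem Fintype.sum_apply_update {ι α M : Type*} [Fintype ι] [DecidableEq ι] [AddCommGroup M]
    (F : ι → α → M) (g : ι → α) (j : ι) (x : α) :
    ∑ i, F i (Function.update g j x i) = ∑ i, F i (g i) + (F j x - F j (g j)) := by
  simp only [Function.apply_update F g j x, Finset.sum_update_of_mem (Finset.mem_univ j),
    Finset.sum_eq_add_sum_sdiff_singleton_of_mem (Finset.mem_univ j) fun i => F i (g i)]
  abel

theorem Finset.sum_mul_le_sum_mul_sum {ι R : Type*} [Semiring R] [PartialOrder R]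
    [IsOrderedRing R] (s : Finset ι) {p q : ι → R}
    (hp : ∀ i ∈ s, 0 ≤ p i) (hq : ∀ i ∈ s, 0 ≤ q i) :
    ∑ i ∈ s, p i * q i ≤ (∑ i ∈ s, p i) * ∑ i ∈ s, q i := by
  rw [Finset.sum_mul]
  exact Finset.sum_le_sum fun i hi =>
    mul_le_mul_of_nonneg_left (Finset.single_le_sum hq hi) (hp i hi)

theorem sum_mul_add_sum_mul_le {ι κ R : Type*} [CommSemiring R] [PartialOrder R]
    [IsOrderedRing R] (s : Finset ι) (t : Finset κ) {a : ι → R} {b : κ → R}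
    {x : ι → R} {y : κ → R} {c : R} (ha : ∀ j ∈ s, 0 ≤ a j) (hb : ∀ l ∈ t, 0 ≤ b l)
    (hasum : ∑ j ∈ s, a j = 1) (hbsum : ∑ l ∈ t, b l = 1) (h : ∀ j ∈ s, ∀ l ∈ t, x j + y l ≤ c) :
    ∑ j ∈ s, x j * a j + ∑ l ∈ t, y l * b l ≤ c := by
  have hsplit : ∑ j ∈ s, x j * a j + ∑ l ∈ t, y l * b l
      = ∑ j ∈ s, ∑ l ∈ t, (x j + y l) * (a j * b l) := by
    simp only [add_mul, Finset.sum_add_distrib]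
    rw [Finset.sum_comm (s := s)]
    simp only [← mul_assoc, ← Finset.mul_sum, ← Finset.sum_mul, hbsum, mul_one]
    simp only [mul_comm (y _), mul_assoc, ← Finset.mul_sum, ← Finset.sum_mul, hasum, one_mul]
  calc ∑ j ∈ s, x j * a j + ∑ l ∈ t, y l * b l
      ≤ ∑ j ∈ s, ∑ l ∈ t, c * (a j * b l) := hsplit ▸ Finset.sum_le_sum fun j hj =>
        Finset.sum_le_sum fun l hl =>
          mul_le_mul_of_nonneg_right (h j hj l hl) (mul_nonneg (ha j hj) (hb l hl))
    _ = c := by simp only [← Finset.mul_sum, hasum, hbsum, mul_one]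

theorem eq_of_forall_mul_sub_exp_le {a r ε : ℝ} (hε : ε ≠ 0)
    (h : ∀ t, t * a - ε * ((exp (t / ε) - 1) * r) ≤ 0) : r = a := by
  have hmax : IsLocalMax (fun t => t * a - ε * ((exp (t / ε) - 1) * r)) 0 :=
    Filter.Eventually.of_forall fun t => by simpa using h t
  have hderiv := ((hasDerivAt_id' (0 : ℝ)).mul_const a).sub
    ((((hasDerivAt_id' (0 : ℝ)).div_const ε).exp.sub_const 1).mul_const r |>.const_mul ε)
  have hzero := hmax.hasDerivAt_eq_zero hderiv
  simp only [zero_div, exp_zero, one_mul] at hzero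
  field_simp at hzero
  linarith

section Dual

variable {m1 m2 m3 : ℕ} {a : Fin m1 → ℝ} {b : Fin m3 → ℝ} {ε : ℝ}
  {C1 : Matrix (Fin m1) (Fin m2) ℝ} {C2 : Matrix (Fin m2) (Fin m3) ℝ}
  {f1 : Fin m1 → ℝ} {f2 : Fin m2 → ℝ} {f3 : Fin m3 → ℝ}

theorem dual2_update_left (j : Fin m1) (t : ℝ) :
    dual2 a b ε C1 C2 (Function.update f1 j (f1 j + t)) f2 f3
      = dual2 a b ε C1 C2 f1 f2 f3
        + (t * a j - ε * ((exp (t / ε) - 1) * ∑ k, exp ((f1 j - f2 k - C1 j k) / ε))) := by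
  have hshift : ∀ k, exp ((f1 j + t - f2 k - C1 j k) / ε)
      = exp (t / ε) * exp ((f1 j - f2 k - C1 j k) / ε) := fun k => by
    rw [← exp_add]; congr 1; ring
  unfold dual2
  rw [Fintype.sum_apply_update (fun i y => y * a i),
    Fintype.sum_apply_update (fun i y => ∑ k, exp ((y - f2 k - C1 i k) / ε))]
  simp only [hshift, ← Finset.mul_sum]
  ring

theorem dual2_update_right (l : Fin m3) (t : ℝ) :
    dual2 a b ε C1 C2 f1 f2 (Function.update f3 l (f3 l + t))
      = dual2 a b ε C1 C2 f1 f2 f3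
        + (t * b l - ε * ((exp (t / ε) - 1) * ∑ k, exp ((f2 k + f3 l - C2 k l) / ε))) := by
  have hshift : ∀ k, exp ((f2 k + (f3 l + t) - C2 k l) / ε)
      = exp (t / ε) * exp ((f2 k + f3 l - C2 k l) / ε) := fun k => by
    rw [← exp_add]; congr 1; ring
  unfold dual2
  rw [Finset.sum_comm (f := fun k l => exp ((f2 k + Function.update f3 _ _ l - C2 k l) / ε)),
    Finset.sum_comm (f := fun k l => exp ((f2 k + f3 l - C2 k l) / ε)),
    Fintype.sum_apply_update (fun i y => y * b i),
    Fintype.sum_apply_update (fun i y => ∑ k, exp ((f2 k + y - C2 k i) / ε))]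
  simp only [hshift, ← Finset.mul_sum]
  ring

theorem sum_exp_left_eq_of_isMax (hε : ε ≠ 0)
    (hmax : ∀ g, dual2 a b ε C1 C2 g f2 f3 ≤ dual2 a b ε C1 C2 f1 f2 f3) (j : Fin m1) :
    ∑ k, exp ((f1 j - f2 k - C1 j k) / ε) = a j :=
  eq_of_forall_mul_sub_exp_le hε fun t => by
    have := hmax (Function.update f1 j (f1 j + t))
    rw [dual2_update_left] at this
    linarith

theorem sum_exp_right_eq_of_isMax (hε : ε ≠ 0)
    (hmax : ∀ g, dual2 a b ε C1 C2 f1 f2 g ≤ dual2 a b ε C1 C2 f1 f2 f3) (l : Fin m3) :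
    ∑ k, exp ((f2 k + f3 l - C2 k l) / ε) = b l :=
  eq_of_forall_mul_sub_exp_le hε fun t => by
    have := hmax (Function.update f3 l (f3 l + t))
    rw [dual2_update_right] at this
    linarith

theorem dual2_eq_of_marginals
    (hrow : ∀ j, ∑ k, exp ((f1 j - f2 k - C1 j k) / ε) = a j)
    (hcol : ∀ l, ∑ k, exp ((f2 k + f3 l - C2 k l) / ε) = b l) :
    dual2 a b ε C1 C2 f1 f2 f3
      = ∑ j, f1 j * a j + ∑ l, f3 l * b l - ε * (∑ j, a j + ∑ l, b l) := by
  unfold dual2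
  rw [Finset.sum_comm (f := fun k l => exp ((f2 k + f3 l - C2 k l) / ε)),
    Finset.sum_congr rfl fun j _ => hrow j, Finset.sum_congr rfl fun l _ => hcol l]

theorem exp_add_div_mul_le_of_marginals
    (hrow : ∀ j, ∑ k, exp ((f1 j - f2 k - C1 j k) / ε) = a j)
    (hcol : ∀ l, ∑ k, exp ((f2 k + f3 l - C2 k l) / ε) = b l)
    (j : Fin m1) (l : Fin m3) :
    exp ((f1 j + f3 l) / ε) * ∑ k, exp (-C1 j k / ε) * exp (-C2 k l / ε) ≤ a j * b l := by
  have hrow' : exp (f1 j / ε) * ∑ k, exp (-f2 k / ε) * exp (-C1 j k / ε) = a j := by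
    rw [← hrow j, Finset.mul_sum]
    refine Finset.sum_congr rfl fun k _ => ?_
    rw [← exp_add, ← exp_add]; congr 1; ring
  have hcol' : exp (f3 l / ε) * ∑ k, exp (f2 k / ε) * exp (-C2 k l / ε) = b l := by
    rw [← hcol l, Finset.mul_sum]
    refine Finset.sum_congr rfl fun k _ => ?_
    rw [← exp_add, ← exp_add]; congr 1; ring
  have hprod : ∀ k, exp (-f2 k / ε) * exp (-C1 j k / ε) * (exp (f2 k / ε) * exp (-C2 k l / ε))
      = exp (-C1 j k / ε) * exp (-C2 k l / ε) := fun k => by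
    rw [← exp_add, ← exp_add, ← exp_add, ← exp_add]; congr 1; ring
  rw [← hrow', ← hcol', add_div, exp_add]
  calc exp (f1 j / ε) * exp (f3 l / ε) * ∑ k, exp (-C1 j k / ε) * exp (-C2 k l / ε)
      = exp (f1 j / ε) * exp (f3 l / ε) * ∑ k, exp (-f2 k / ε) * exp (-C1 j k / ε)
          * (exp (f2 k / ε) * exp (-C2 k l / ε)) := by simp only [hprod]
    _ ≤ exp (f1 j / ε) * exp (f3 l / ε) * ((∑ k, exp (-f2 k / ε) * exp (-C1 j k / ε))
          * ∑ k, exp (f2 k / ε) * exp (-C2 k l / ε)) := by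
        gcongr
        exact Finset.sum_mul_le_sum_mul_sum _ (fun k _ => by positivity) fun k _ => by positivity
    _ = _ := by ring

theorem add_le_neg_mul_log_of_marginals (hε : 0 < ε)
    (hrow : ∀ j, ∑ k, exp ((f1 j - f2 k - C1 j k) / ε) = a j)
    (hcol : ∀ l, ∑ k, exp ((f2 k + f3 l - C2 k l) / ε) = b l)
    {κ : ℝ} (hκ : 0 < κ) (j : Fin m1) (l : Fin m3)
    (hκle : κ ≤ ∑ k, exp (-C1 j k / ε) * exp (-C2 k l / ε)) (hab : a j * b l ≤ 1) :
    f1 j + f3 l ≤ -(ε * log κ) := by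
  have hexp : exp ((f1 j + f3 l) / ε) ≤ κ⁻¹ := by
    rw [← one_div, le_div_iff₀ hκ]
    calc exp ((f1 j + f3 l) / ε) * κ
        ≤ exp ((f1 j + f3 l) / ε) * ∑ k, exp (-C1 j k / ε) * exp (-C2 k l / ε) := by gcongr
      _ ≤ 1 := (exp_add_div_mul_le_of_marginals hrow hcol j l).trans hab
  have hlog := (le_log_iff_exp_le (inv_pos.mpr hκ)).mpr hexp
  rw [log_inv, div_le_iff₀ hε] at hlog
  linarith

end Dual

theorem dual2_const {m1 m2 m3 : ℕ} (a : Fin m1 → ℝ) (b : Fin m3 → ℝ) (ε : ℝ)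
    (C1 : Matrix (Fin m1) (Fin m2) ℝ) (C2 : Matrix (Fin m2) (Fin m3) ℝ) (x z : ℝ) :
    dual2 a b ε C1 C2 (fun _ => x) (fun _ => 0) (fun _ => z)
      = x * ∑ j, a j + z * ∑ l, b l
        - ε * (exp (x / ε) * ∑ j, ∑ k, exp (-C1 j k / ε)
          + exp (z / ε) * ∑ k, ∑ l, exp (-C2 k l / ε)) := by
  have hleft : ∀ j k, exp ((x - 0 - C1 j k) / ε) = exp (x / ε) * exp (-C1 j k / ε) :=
    fun j k => by rw [← exp_add]; congr 1; ring
  have hright : ∀ k l, exp ((0 + z - C2 k l) / ε) = exp (z / ε) * exp (-C2 k l / ε) :=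
    fun k l => by rw [← exp_add]; congr 1; ring
  simp only [dual2, hleft, hright, ← Finset.mul_sum]

theorem dual2_initial {m1 m2 m3 : ℕ} [Nonempty (Fin m1)] [Nonempty (Fin m2)] [Nonempty (Fin m3)]
    (a : Fin m1 → ℝ) (b : Fin m3 → ℝ) {ε : ℝ} (hε : ε ≠ 0)
    (C1 : Matrix (Fin m1) (Fin m2) ℝ) (C2 : Matrix (Fin m2) (Fin m3) ℝ)
    (hasum : ∑ j, a j = 1) (hbsum : ∑ l, b l = 1) :
    dual2 a b ε C1 C2 (fun _ => ε * log (1 / ∑ j, ∑ k, exp (-C1 j k / ε))) (fun _ => ε * log 1)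
        (fun _ => ε * log (1 / ∑ k, ∑ l, exp (-C2 k l / ε)))
      = -(ε * log (∑ j, ∑ k, exp (-C1 j k / ε))) - ε * log (∑ k, ∑ l, exp (-C2 k l / ε))
        - 2 * ε := by
  have hS1 : 0 < ∑ j, ∑ k, exp (-C1 j k / ε) := by positivity
  have hS2 : 0 < ∑ k, ∑ l, exp (-C2 k l / ε) := by positivity
  rw [log_one, mul_zero, dual2_const, hasum, hbsum, mul_div_cancel_left₀ _ hε,
    mul_div_cancel_left₀ _ hε, exp_log (by positivity), exp_log (by positivity),
    one_div_mul_cancel hS1.ne', one_div_mul_cancel hS2.ne', one_div, one_div, log_inv, log_inv]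
  ring

theorem sinkhorn_initial_dual_gap_general
    {m1 m2 m3 : ℕ} (hm1 : 0 < m1) (hm2 : 0 < m2) (hm3 : 0 < m3)
    (C1 : Matrix (Fin m1) (Fin m2) ℝ) (C2 : Matrix (Fin m2) (Fin m3) ℝ)
    (a : Fin m1 → ℝ) (b : Fin m3 → ℝ)
    (ha : ∀ j, 0 < a j) (hb : ∀ l, 0 < b l)
    (hasum : ∑ j, a j = 1) (hbsum : ∑ l, b l = 1)
    (ε : ℝ) (hε : 0 < ε)
    (K1 : Matrix (Fin m1) (Fin m2) ℝ) (K2 : Matrix (Fin m2) (Fin m3) ℝ)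
    (hK1 : ∀ j k, K1 j k = Real.exp (-C1 j k / ε))
    (hK2 : ∀ k l, K2 k l = Real.exp (-C2 k l / ε))
    (u01 : Fin m1 → ℝ) (u02 : Fin m2 → ℝ) (u03 : Fin m3 → ℝ)
    (hinit1 : u01 = fun _ => 1 / (∑ j, ∑ k, K1 j k))
    (hinit2 : u02 = fun _ => 1)
    (hinit3 : u03 = fun _ => 1 / (∑ k, ∑ l, K2 k l))
    (uh1 : Fin m1 → ℝ) (uh2 : Fin m2 → ℝ) (uh3 : Fin m3 → ℝ)
    (hopt : ∀ (f1 : Fin m1 → ℝ) (f2 : Fin m2 → ℝ) (f3 : Fin m3 → ℝ),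
      dual2 a b ε C1 C2 f1 f2 f3 ≤
        dual2 a b ε C1 C2 (fun j => ε * Real.log (uh1 j))
          (fun k => ε * Real.log (uh2 k)) (fun l => ε * Real.log (uh3 l)))
    (Kmin : ℝ)
    (hKmin : Kmin = ⨅ p : Fin m1 × Fin m3, ∑ k, K1 p.1 k * K2 k p.2) :
    dual2 a b ε C1 C2 (fun j => ε * Real.log (uh1 j))
        (fun k => ε * Real.log (uh2 k)) (fun l => ε * Real.log (uh3 l))
      - dual2 a b ε C1 C2 (fun j => ε * Real.log (u01 j))
        (fun k => ε * Real.log (u02 k)) (fun l => ε * Real.log (u03 l))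
      ≤ ε * Real.log ((∑ j, ∑ k, K1 j k) * (∑ k, ∑ l, K2 k l) / Kmin) := by
  have : Nonempty (Fin m1) := Fin.pos_iff_nonempty.mp hm1
  have : Nonempty (Fin m2) := Fin.pos_iff_nonempty.mp hm2
  have : Nonempty (Fin m3) := Fin.pos_iff_nonempty.mp hm3
  obtain rfl : K1 = fun j k => exp (-C1 j k / ε) := funext₂ hK1
  obtain rfl : K2 = fun k l => exp (-C2 k l / ε) := funext₂ hK2
  subst hinit1 hinit2 hinit3
  set f1 := fun j => ε * log (uh1 j)
  set f3 := fun l => ε * log (uh3 l)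
  have hrow := sum_exp_left_eq_of_isMax hε.ne' fun g => hopt g _ _
  have hcol := sum_exp_right_eq_of_isMax hε.ne' (hopt f1 _)
  have hKmin_pos : 0 < Kmin := by
    obtain ⟨p, hp⟩ := exists_eq_ciInf_of_finite
      (f := fun p : Fin m1 × Fin m3 => ∑ k, exp (-C1 p.1 k / ε) * exp (-C2 k p.2 / ε))
    rw [hKmin, ← hp]
    positivity
  have hbound : ∀ j l, f1 j + f3 l ≤ -(ε * log Kmin) := fun j l =>
    add_le_neg_mul_log_of_marginals hε hrow hcol hKmin_pos j l
      (hKmin ▸ ciInf_le (Finite.bddBelow_range _) (j, l))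
      (mul_le_one₀ (hasum ▸ single_le_sum (fun i _ => (ha i).le) (mem_univ j)) (hb l).le
        (hbsum ▸ single_le_sum (fun i _ => (hb i).le) (mem_univ l)))
  have hlinear := sum_mul_add_sum_mul_le univ univ (fun j _ => (ha j).le) (fun l _ => (hb l).le)
    hasum hbsum fun j _ l _ => hbound j l
  rw [dual2_eq_of_marginals hrow hcol, dual2_initial a b hε.ne' C1 C2 hasum hbsum, hasum, hbsum,
    log_div (by positivity) hKmin_pos.ne', log_mul (by positivity) (by positivity)]
  linarith

/-- **Gap between initial and optimal dual value** (Lem. 4.4): with the fixed initial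
vectors and a dual-optimal triple `(û¹,û²,û³)`,
`L(û) − L(u⁰) ≤ ε·log(‖K¹‖₁‖K²‖₁/K)` where `K = min_{j,l} Σ_k K¹_{jk}K²_{kl}`. -/
theorem sinkhorn_initial_dual_gap
    {m1 m2 m3 : ℕ} (hm1 : 0 < m1) (hm2 : 0 < m2) (hm3 : 0 < m3)
    (C1 : Matrix (Fin m1) (Fin m2) ℝ) (C2 : Matrix (Fin m2) (Fin m3) ℝ)
    (hC1 : ∀ j k, 0 ≤ C1 j k) (hC2 : ∀ k l, 0 ≤ C2 k l)
    (a : Fin m1 → ℝ) (b : Fin m3 → ℝ)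
    (ha : ∀ j, 0 < a j) (hb : ∀ l, 0 < b l)
    (hasum : ∑ j, a j = 1) (hbsum : ∑ l, b l = 1)
    (ε : ℝ) (hε : 0 < ε)
    (K1 : Matrix (Fin m1) (Fin m2) ℝ) (K2 : Matrix (Fin m2) (Fin m3) ℝ)
    (hK1 : ∀ j k, K1 j k = Real.exp (-C1 j k / ε))
    (hK2 : ∀ k l, K2 k l = Real.exp (-C2 k l / ε))
    (u01 : Fin m1 → ℝ) (u02 : Fin m2 → ℝ) (u03 : Fin m3 → ℝ)
    (hinit1 : u01 = fun _ => 1 / (∑ j, ∑ k, K1 j k))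
    (hinit2 : u02 = fun _ => 1)
    (hinit3 : u03 = fun _ => 1 / (∑ k, ∑ l, K2 k l))
    (uh1 : Fin m1 → ℝ) (uh2 : Fin m2 → ℝ) (uh3 : Fin m3 → ℝ)
    (hpos1 : ∀ j, 0 < uh1 j) (hpos2 : ∀ k, 0 < uh2 k) (hpos3 : ∀ l, 0 < uh3 l)
    (hopt : ∀ (f1 : Fin m1 → ℝ) (f2 : Fin m2 → ℝ) (f3 : Fin m3 → ℝ),
      dual2 a b ε C1 C2 f1 f2 f3 ≤
        dual2 a b ε C1 C2 (fun j => ε * Real.log (uh1 j))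
          (fun k => ε * Real.log (uh2 k)) (fun l => ε * Real.log (uh3 l)))
    (Kmin : ℝ)
    (hKmin : Kmin = ⨅ p : Fin m1 × Fin m3, ∑ k, K1 p.1 k * K2 k p.2) :
    dual2 a b ε C1 C2 (fun j => ε * Real.log (uh1 j))
        (fun k => ε * Real.log (uh2 k)) (fun l => ε * Real.log (uh3 l))
      - dual2 a b ε C1 C2 (fun j => ε * Real.log (u01 j))
        (fun k => ε * Real.log (u02 k)) (fun l => ε * Real.log (u03 l))
      ≤ ε * Real.log ((∑ j, ∑ k, K1 j k) * (∑ k, ∑ l, K2 k l) / Kmin) :=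
  sinkhorn_initial_dual_gap_general hm1 hm2 hm3 C1 C2 a b ha hb hasum hbsum ε hε K1 K2 hK1 hK2 u01
    u02 u03 hinit1 hinit2 hinit3 uh1 uh2 uh3 hopt Kmin hKmin
end
end

section
/- Approximation guarantee of the Sinkhorn algorithm for M = 2: let δ > 0, assume m1·m2²·m3 ≥ 2, max(‖C^(1)‖_∞, ‖C^(2)‖_∞) > 0, and set ε := δ/(2·log(m1·m2²·m3)). Suppose n ∈ ℕ satisfies the stopping criterion S_n ≤ δ/(16·max(‖C^(1)‖_∞, ‖C^(2)‖_∞)). Define ρ := Σ of all entries of diag(u^(n,1)) K^(1) diag(1/u^(n+1,2)), P^(n+0.5,1) := diag(u^(n,1)/ρ) K^(1) diag(1/u^(n+1,2)), P^(n+0.5,2) := diag(u^(n+1,2)) K^(2) diag(u^(n,3)/ρ), a' := P^(n+0.5,1)1_{m2}, and b' := (P^(n+0.5,2))ᵀ1_{m2}. Let P̃^(1) ∈ ℝ_{≥0}^{m1×m2} and P̃^(2) ∈ ℝ_{≥0}^{m2×m3} be any feasible pair (P̃^(1)1_{m2} = a, (P̃^(2))ᵀ1_{m2} = b, (P̃^(1))ᵀ1_{m1}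 = P̃^(2)1_{m3}) satisfying ‖P̃^(1) − P^(n+0.5,1)‖₁ ≤ 2‖a − a'‖₁ and ‖P̃^(2) − P^(n+0.5,2)‖₁ ≤ 2‖b − b'‖₁. Then ⟨C^(1), P̃^(1)⟩ + ⟨C^(2), P̃^(2)⟩ ≤ min over all feasible pairs (P^(1), P^(2)) of (⟨C^(1), P^(1)⟩ + ⟨C^(2), P^(2)⟩) + δ. -/
open Matrix Finset Real

noncomputable section

/-- The sup-norm `‖X‖_∞` of a matrix: the maximum absolute value of its entries. -/
def linf {m n : ℕ} (X : Matrix (Fin m) (Fin n) ℝ) : ℝ := ⨆ p : Fin m × Fin n, |X p.1 p.2|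

/-!
The half-step pair `P^(n+0.5)` has the Gibbs form `diag(α) K¹ diag(1/β)`, `diag(β) K² diag(η)`,
and the square-root update of `u^(n+1,2)` makes its two middle marginals agree; so it is a feasible
pair for its own marginals `(a', b')`, and among all such pairs it minimises cost plus
`ε`·(negative entropy), because against a Gibbs pair this functional is a relative entropy plus a
term depending only on `(a', b')`. The negative entropy of a probability matrix lies in
`[-log (number of entries), 0]`, so its cost is within `ε log (m₁m₂²m₃) = δ/2` of that of every
feasible pair for `(a', b')`.

Any feasible pair for `(a, b)` can be rounded to one for `(a', b')` at `ℓ¹`-distance at most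
`2 (‖a - a'‖₁ + ‖b - b'‖₁)`, and `P̃` is that close to `P^(n+0.5)` by assumption; each move changes
the cost by at most `max ‖C‖_∞` times the distance. Finally `r_n = u^(n,2) / u^(n+1,2)`, so
`S_n = ‖a - ρ a'‖₁ + ‖b - ρ b'‖₁`, and `‖a - a'‖₁ ≤ 2 ‖a - ρ a'‖₁` because both vectors are
probability vectors; the stopping criterion therefore bounds the rounding losses by `δ/2`.
-/

theorem sub_le_mul_log_sub_mul_log {x y : ℝ} (hx : 0 ≤ x) (hy : 0 < y) :
    x - y ≤ x * log x - x * log y := by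
  rcases hx.eq_or_lt with rfl | hx
  · simpa using hy.le
  · have h := one_sub_inv_le_log_of_pos (div_pos hx hy)
    rw [inv_div, log_div hx.ne' hy.ne'] at h
    calc x - y = x * (1 - y / x) := by field_simp
      _ ≤ x * (log x - log y) := mul_le_mul_of_nonneg_left h hx.le
      _ = x * log x - x * log y := mul_sub _ _ _

section Entropy

variable {m n : Type*} [Fintype m] [Fintype n]

def transportCost (C X : Matrix m n ℝ) : ℝ := ∑ i, ∑ j, C i j * X i j

def negEntropy (X : Matrix m n ℝ) : ℝ := ∑ i, ∑ j, X i j * log (X i j)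

def relEntropy (X P : Matrix m n ℝ) : ℝ :=
  ∑ i, ∑ j, (X i j * log (X i j) - X i j * log (P i j))

theorem relEntropy_self (P : Matrix m n ℝ) : relEntropy P P = 0 := by
  simp [relEntropy]

theorem relEntropy_nonneg {X P : Matrix m n ℝ} (hX : ∀ i j, 0 ≤ X i j) (hP : ∀ i j, 0 < P i j)
    (hsum : ∑ i, ∑ j, X i j = ∑ i, ∑ j, P i j) : 0 ≤ relEntropy X P :=
  calc 0 = ∑ i, ∑ j, (X i j - P i j) := by simp only [sum_sub_distrib, hsum, sub_self]
    _ ≤ relEntropy X P := sum_le_sum fun i _ => sum_le_sum fun j _ =>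
      sub_le_mul_log_sub_mul_log (hX i j) (hP i j)

theorem le_sum_sum_of_nonneg {X : Matrix m n ℝ} (hX : ∀ i j, 0 ≤ X i j) (i : m) (j : n) :
    X i j ≤ ∑ i, ∑ j, X i j :=
  (single_le_sum (fun j _ => hX i j) (mem_univ j)).trans
    (single_le_sum (f := fun i => ∑ j, X i j) (fun i _ => sum_nonneg fun j _ => hX i j)
      (mem_univ i))

theorem negEntropy_nonpos {X : Matrix m n ℝ} (hX : ∀ i j, 0 ≤ X i j)
    (hsum : ∑ i, ∑ j, X i j = 1) : negEntropy X ≤ 0 :=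
  sum_nonpos fun i _ => sum_nonpos fun j _ =>
    mul_log_nonpos (hX i j) (hsum ▸ le_sum_sum_of_nonneg hX i j)

-- Gibbs' inequality against the uniform matrix.
theorem neg_log_card_le_negEntropy [Nonempty m] [Nonempty n] {X : Matrix m n ℝ}
    (hX : ∀ i j, 0 ≤ X i j) (hsum : ∑ i, ∑ j, X i j = 1) :
    -log (Fintype.card m * Fintype.card n) ≤ negEntropy X := by
  set c : ℝ := (Fintype.card m * Fintype.card n : ℝ)⁻¹
  have hc : 0 < c := by positivity
  have hgibbs := relEntropy_nonneg hX (P := fun _ _ => c) (fun _ _ => hc) (by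
    simp only [sum_const, card_univ, nsmul_eq_mul, hsum, c]
    field_simp)
  have hrel :
      relEntropy X (fun _ _ => c) = negEntropy X + log (Fintype.card m * Fintype.card n) := by
    simp only [relEntropy, negEntropy, sum_sub_distrib, ← sum_mul, hsum, one_mul, c, log_inv,
      sub_neg_eq_add]
  linarith

theorem transportCost_add_negEntropy_eq_relEntropy {ε : ℝ} (hε : ε ≠ 0) {C X P : Matrix m n ℝ}
    {f : m → ℝ} {g : n → ℝ} (hP : ∀ i j, P i j = exp ((f i + g j - C i j) / ε)) :
    transportCost C X + ε * negEntropy X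
      = ε * relEntropy X P + ∑ i, f i * ∑ j, X i j + ∑ j, g j * ∑ i, X i j := by
  have hC : ∀ i j, C i j = f i + g j - ε * log (P i j) := fun i j => by
    rw [hP, log_exp]; field_simp; ring
  simp only [transportCost, negEntropy, relEntropy, mul_sum, hC]
  rw [sum_comm (f := fun j i => g j * X i j)]
  simp only [← sum_add_distrib]
  exact sum_congr rfl fun i _ => sum_congr rfl fun j _ => by ring

end Entropy

section ScaleRows

variable {m n : Type*} [Fintype n]

-- A row with sum zero stays zero, since `t i / 0 = 0`.
def scaleRows (X : Matrix m n ℝ) (t : m → ℝ) : Matrix m n ℝ :=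
  fun i j => t i / (∑ j', X i j') * X i j

variable {X : Matrix m n ℝ} {t : m → ℝ}

theorem scaleRows_nonneg (hX : ∀ i j, 0 ≤ X i j) (ht : ∀ i, 0 ≤ t i) (i : m) (j : n) :
    0 ≤ scaleRows X t i j :=
  mul_nonneg (div_nonneg (ht i) (sum_nonneg fun j _ => hX i j)) (hX i j)

theorem scaleRows_le (hX : ∀ i j, 0 ≤ X i j) (ht : ∀ i, t i ≤ ∑ j, X i j) (i : m) (j : n) :
    scaleRows X t i j ≤ X i j :=
  mul_le_of_le_one_left (hX i j) (div_le_one_of_le₀ (ht i) (sum_nonneg fun j _ => hX i j))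

theorem sum_scaleRows (ht₀ : ∀ i, 0 ≤ t i)
    (ht : ∀ i, t i ≤ ∑ j, X i j) (i : m) : ∑ j, scaleRows X t i j = t i := by
  simp only [scaleRows, ← mul_sum]
  exact div_mul_cancel_of_imp fun h => le_antisymm (h ▸ ht i) (ht₀ i)

end ScaleRows

section ChainCoupling

variable {m n p : Type*} [Fintype m] [Fintype n] [Fintype p]

-- The feasible pairs of the paper, for marginals `a` and `b`.
structure IsChainCoupling (a : m → ℝ) (b : p → ℝ) (P₁ : Matrix m n ℝ) (P₂ : Matrix n p ℝ) :
    Prop where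
  nonneg₁ : ∀ i j, 0 ≤ P₁ i j
  nonneg₂ : ∀ j k, 0 ≤ P₂ j k
  sum_row : ∀ i, ∑ j, P₁ i j = a i
  sum_col : ∀ k, ∑ j, P₂ j k = b k
  sum_mid : ∀ j, ∑ i, P₁ i j = ∑ k, P₂ j k

namespace IsChainCoupling

variable {a : m → ℝ} {b : p → ℝ} {P₁ : Matrix m n ℝ} {P₂ : Matrix n p ℝ}

theorem of_mulVec (h₁ : ∀ i j, 0 ≤ P₁ i j) (h₂ : ∀ j k, 0 ≤ P₂ j k)
    (ha : (P₁ *ᵥ fun _ => 1) = a) (hb : (P₂ᵀ *ᵥ fun _ => 1) = b)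
    (hmid : (P₁ᵀ *ᵥ fun _ => 1) = (P₂ *ᵥ fun _ => 1)) : IsChainCoupling a b P₁ P₂ where
  nonneg₁ := h₁
  nonneg₂ := h₂
  sum_row i := by simpa [mulVec, dotProduct] using congrFun ha i
  sum_col k := by simpa [mulVec, dotProduct] using congrFun hb k
  sum_mid j := by simpa [mulVec, dotProduct] using congrFun hmid j

theorem transpose (h : IsChainCoupling a b P₁ P₂) : IsChainCoupling b a P₂ᵀ P₁ᵀ where
  nonneg₁ k j := h.nonneg₂ j k
  nonneg₂ j i := h.nonneg₁ i j
  sum_row := h.sum_col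
  sum_col := h.sum_row
  sum_mid j := (h.sum_mid j).symm

theorem marginal_left_nonneg (h : IsChainCoupling a b P₁ P₂) (i : m) : 0 ≤ a i :=
  h.sum_row i ▸ sum_nonneg fun j _ => h.nonneg₁ i j

theorem marginal_right_nonneg (h : IsChainCoupling a b P₁ P₂) (k : p) : 0 ≤ b k :=
  h.sum_col k ▸ sum_nonneg fun j _ => h.nonneg₂ j k

theorem sum_sum₁ (h : IsChainCoupling a b P₁ P₂) : ∑ i, ∑ j, P₁ i j = ∑ i, a i :=
  sum_congr rfl fun i _ => h.sum_row i

theorem sum_sum₂ (h : IsChainCoupling a b P₁ P₂) : ∑ j, ∑ k, P₂ j k = ∑ k, b k :=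
  sum_comm.trans (sum_congr rfl fun k _ => h.sum_col k)

theorem sum_eq (h : IsChainCoupling a b P₁ P₂) : ∑ i, a i = ∑ k, b k := by
  rw [← h.sum_sum₁, ← h.sum_sum₂]
  exact sum_comm.trans (sum_congr rfl fun j _ => h.sum_mid j)

end IsChainCoupling

variable {a : m → ℝ} {b : p → ℝ} {Q₁ : Matrix m n ℝ} {Q₂ : Matrix n p ℝ}

-- Scale the rows of `Q₁` down to `min a c`, then the rows of `Q₂` to the new middle marginal.
theorem IsChainCoupling.exists_trim_left (hQ : IsChainCoupling a b Q₁ Q₂) {c : m → ℝ}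
    (hc : ∀ i, 0 ≤ c i) :
    ∃ (Q₁' : Matrix m n ℝ) (Q₂' : Matrix n p ℝ) (b' : p → ℝ),
      IsChainCoupling (fun i => min (a i) (c i)) b' Q₁' Q₂' ∧
        (∀ i j, Q₁' i j ≤ Q₁ i j) ∧ ∀ j k, Q₂' j k ≤ Q₂ j k := by
  have hrow : ∀ i, min (a i) (c i) ≤ ∑ j, Q₁ i j := fun i => hQ.sum_row i ▸ min_le_left _ _
  set Q₁' := scaleRows Q₁ fun i => min (a i) (c i)
  have hQ₁'nn := scaleRows_nonneg hQ.nonneg₁ fun i => le_min (hQ.marginal_left_nonneg i) (hc i)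
  have hQ₁'le := scaleRows_le hQ.nonneg₁ hrow
  have hmid : ∀ j, ∑ i, Q₁' i j ≤ ∑ k, Q₂ j k := fun j =>
    hQ.sum_mid j ▸ sum_le_sum fun i _ => hQ₁'le i j
  have hmid₀ : ∀ j, 0 ≤ ∑ i, Q₁' i j := fun j => sum_nonneg fun i _ => hQ₁'nn i j
  refine ⟨Q₁', scaleRows Q₂ fun j => ∑ i, Q₁' i j, _,
    ⟨hQ₁'nn, scaleRows_nonneg hQ.nonneg₂ hmid₀,
      sum_scaleRows (fun i => le_min (hQ.marginal_left_nonneg i) (hc i)) hrow, fun _ => rfl,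
      fun j => (sum_scaleRows hmid₀ hmid j).symm⟩,
    hQ₁'le, scaleRows_le hQ.nonneg₂ hmid⟩

theorem sum_sub_half_sum_abs_le_sum_min {ι : Type*} [Fintype ι] {x y c : ι → ℝ}
    (hxy : ∀ i, x i ≤ y i) (hsum : ∑ i, c i = ∑ i, y i) :
    ∑ i, x i - (∑ i, |y i - c i|) / 2 ≤ ∑ i, min (x i) (c i) := by
  have key : ∀ i, x i - (y i - c i + |y i - c i|) / 2 ≤ min (x i) (c i) := fun i => by
    have := le_abs_self (y i - c i)
    have := neg_abs_le (y i - c i)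
    rcases min_cases (x i) (c i) with ⟨h, _⟩ | ⟨h, _⟩ <;> rw [h] <;> linarith [hxy i]
  calc ∑ i, x i - (∑ i, |y i - c i|) / 2 = ∑ i, (x i - (y i - c i + |y i - c i|) / 2) := by
        rw [sum_sub_distrib, ← sum_div, sum_add_distrib, sum_sub_distrib, hsum, sub_self,
          zero_add]
    _ ≤ ∑ i, min (x i) (c i) := sum_le_sum fun i _ => key i

-- Add product mass, spread uniformly over `n`.
theorem IsChainCoupling.exists_ge [Nonempty n] {a₀ : m → ℝ} {b₀ : p → ℝ}
    (hQ : IsChainCoupling a₀ b₀ Q₁ Q₂) (ha : ∀ i, a₀ i ≤ a i) (hb : ∀ k, b₀ k ≤ b k)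
    (hab : ∑ i, a i = ∑ k, b k) :
    ∃ (R₁ : Matrix m n ℝ) (R₂ : Matrix n p ℝ), IsChainCoupling a b R₁ R₂ ∧
      (∀ i j, Q₁ i j ≤ R₁ i j) ∧ ∀ j k, Q₂ j k ≤ R₂ j k := by
  set w : ℝ := (Fintype.card n : ℝ)⁻¹
  have hw : 0 ≤ w := by positivity
  have hsumw : ∑ _j : n, w = 1 := by
    simp only [sum_const, card_univ, nsmul_eq_mul, w]
    exact mul_inv_cancel₀ (Nat.cast_ne_zero.2 Fintype.card_ne_zero)
  have hdefect : ∑ i, (a i - a₀ i) = ∑ k, (b k - b₀ k) := by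
    rw [sum_sub_distrib, sum_sub_distrib, hab, hQ.sum_eq]
  refine ⟨fun i j => Q₁ i j + (a i - a₀ i) * w, fun j k => Q₂ j k + w * (b k - b₀ k),
    ⟨fun i j => ?_, fun j k => ?_, fun i => ?_, fun k => ?_, fun j => ?_⟩,
    fun i j => ?_, fun j k => ?_⟩
  · exact add_nonneg (hQ.nonneg₁ i j) (mul_nonneg (sub_nonneg.2 (ha i)) hw)
  · exact add_nonneg (hQ.nonneg₂ j k) (mul_nonneg hw (sub_nonneg.2 (hb k)))
  · rw [sum_add_distrib, ← mul_sum, hsumw, hQ.sum_row]; ring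
  · rw [sum_add_distrib, ← sum_mul, hsumw, hQ.sum_col]; ring
  · rw [sum_add_distrib, sum_add_distrib, hQ.sum_mid, ← sum_mul, ← mul_sum, hdefect, mul_comm]
  · exact le_add_of_nonneg_right (mul_nonneg (sub_nonneg.2 (ha i)) hw)
  · exact le_add_of_nonneg_right (mul_nonneg hw (sub_nonneg.2 (hb k)))

theorem sum_abs_sub_le_of_le {X Y S : Matrix m n ℝ} (hX : ∀ i j, S i j ≤ X i j)
    (hY : ∀ i j, S i j ≤ Y i j) :
    ∑ i, ∑ j, |X i j - Y i j| ≤ ∑ i, ∑ j, X i j + ∑ i, ∑ j, Y i j - 2 * ∑ i, ∑ j, S i j := by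
  have key : ∀ i j, |X i j - Y i j| ≤ X i j + Y i j - 2 * S i j := fun i j =>
    abs_sub_le_iff.2 ⟨by linarith [hY i j], by linarith [hX i j]⟩
  calc ∑ i, ∑ j, |X i j - Y i j| ≤ ∑ i, ∑ j, (X i j + Y i j - 2 * S i j) :=
        sum_le_sum fun i _ => sum_le_sum fun j _ => key i j
    _ = _ := by simp only [sum_add_distrib, sum_sub_distrib, mul_sum]

/- Trim the rows to `min a a'`, then, through the transpose, the columns to `min · b'`, and
complete. Every step only removes or only adds mass, so `ℓ¹`-distances are differences of total
masses. -/
theorem IsChainCoupling.exists_near [Nonempty n] (hQ : IsChainCoupling a b Q₁ Q₂)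
    {a' : m → ℝ} {b' : p → ℝ} (ha' : ∀ i, 0 ≤ a' i) (hb' : ∀ k, 0 ≤ b' k)
    (hsa : ∑ i, a' i = ∑ i, a i) (hsb : ∑ k, b' k = ∑ k, b k) :
    ∃ (R₁ : Matrix m n ℝ) (R₂ : Matrix n p ℝ), IsChainCoupling a' b' R₁ R₂ ∧
      ∑ i, ∑ j, |R₁ i j - Q₁ i j| + ∑ j, ∑ k, |R₂ j k - Q₂ j k|
        ≤ 2 * (∑ i, |a i - a' i| + ∑ k, |b k - b' k|) := by
  obtain ⟨Q₁', Q₂', b₁, hQ', hQ₁', hQ₂'⟩ := hQ.exists_trim_left ha'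
  obtain ⟨S₂, S₁, a₁, hS, hS₂, hS₁⟩ := hQ'.transpose.exists_trim_left hb'
  replace hS := hS.transpose
  have ha₁ : ∀ i, a₁ i ≤ a' i := fun i => by
    rw [← hS.sum_row]
    exact (sum_le_sum fun j _ => hS₁ j i).trans ((hQ'.sum_row i).trans_le (min_le_right _ _))
  obtain ⟨R₁, R₂, hR, hR₁, hR₂⟩ := hS.exists_ge ha₁ (fun k => min_le_right _ _) (by
    rw [hsa, hsb, hQ.sum_eq])
  refine ⟨R₁, R₂, hR, ?_⟩
  have hb₁ : ∀ k, b₁ k ≤ b k := fun k => by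
    rw [← hQ'.sum_col, ← hQ.sum_col]; exact sum_le_sum fun j _ => hQ₂' j k
  have hmass₁ := sum_sub_half_sum_abs_le_sum_min (fun i => le_refl (a i)) hsa
  have hmass₂ := sum_sub_half_sum_abs_le_sum_min hb₁ hsb
  have e₁ := sum_abs_sub_le_of_le hR₁ fun i j => (hS₁ j i).trans (hQ₁' i j)
  have e₂ := sum_abs_sub_le_of_le hR₂ fun j k => (hS₂ k j).trans (hQ₂' j k)
  rw [hR.sum_sum₁, hQ.sum_sum₁, hS.sum_sum₁] at e₁
  rw [hR.sum_sum₂, hQ.sum_sum₂, hS.sum_sum₂] at e₂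
  linarith [hS.sum_eq, hQ'.sum_eq, hQ.sum_eq]

end ChainCoupling

section Gibbs

variable {m n p : Type*} [Fintype m] [Fintype n] [Fintype p]

theorem transportCost_le_add {C X Y : Matrix m n ℝ} {M : ℝ} (hC : ∀ i j, |C i j| ≤ M) :
    transportCost C X ≤ transportCost C Y + M * ∑ i, ∑ j, |X i j - Y i j| := by
  have key : ∀ i j, C i j * X i j ≤ C i j * Y i j + M * |X i j - Y i j| := fun i j => by
    have h₁ := (le_abs_self (C i j * (X i j - Y i j))).trans_eq (abs_mul _ _)
    have h₂ := mul_le_mul_of_nonneg_right (hC i j) (abs_nonneg (X i j - Y i j))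
    rw [mul_sub] at h₁
    linarith
  simp only [transportCost, mul_sum, ← sum_add_distrib]
  exact sum_le_sum fun i _ => sum_le_sum fun j _ => key i j

variable {ε : ℝ} {C₁ P₁ X₁ : Matrix m n ℝ} {C₂ P₂ X₂ : Matrix n p ℝ}
  {f : m → ℝ} {g : n → ℝ} {h : p → ℝ} {a : m → ℝ} {b : p → ℝ}

-- The middle potential `g` cancels because the middle marginals of `X` agree.
theorem IsChainCoupling.transportCost_add_negEntropy_eq (hε : ε ≠ 0)
    (hP₁ : ∀ i j, P₁ i j = exp ((f i - g j - C₁ i j) / ε))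
    (hP₂ : ∀ j k, P₂ j k = exp ((g j + h k - C₂ j k) / ε))
    (hX : IsChainCoupling a b X₁ X₂) :
    transportCost C₁ X₁ + transportCost C₂ X₂ + ε * (negEntropy X₁ + negEntropy X₂)
      = ε * (relEntropy X₁ P₁ + relEntropy X₂ P₂) + ∑ i, f i * a i + ∑ k, h k * b k := by
  have e₁ := transportCost_add_negEntropy_eq_relEntropy hε (C := C₁) (X := X₁) (P := P₁)
    (f := f) (g := fun j => -g j) fun i j => by rw [hP₁, sub_eq_add_neg (f i)]
  have e₂ := transportCost_add_negEntropy_eq_relEntropy hε (X := X₂) hP₂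
  simp only [hX.sum_row, hX.sum_col, hX.sum_mid, neg_mul, sum_neg_distrib] at e₁ e₂
  linear_combination e₁ + e₂

theorem IsChainCoupling.transportCost_add_negEntropy_le (hε : 0 < ε)
    (hP₁ : ∀ i j, P₁ i j = exp ((f i - g j - C₁ i j) / ε))
    (hP₂ : ∀ j k, P₂ j k = exp ((g j + h k - C₂ j k) / ε))
    (hP : IsChainCoupling a b P₁ P₂) (hX : IsChainCoupling a b X₁ X₂) :
    transportCost C₁ P₁ + transportCost C₂ P₂ + ε * (negEntropy P₁ + negEntropy P₂)
      ≤ transportCost C₁ X₁ + transportCost C₂ X₂ + ε * (negEntropy X₁ + negEntropy X₂) := by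
  rw [hP.transportCost_add_negEntropy_eq hε.ne' hP₁ hP₂,
    hX.transportCost_add_negEntropy_eq hε.ne' hP₁ hP₂, relEntropy_self, relEntropy_self]
  have h₁ := relEntropy_nonneg hX.nonneg₁ (fun i j => hP₁ i j ▸ exp_pos _)
    (by rw [hX.sum_sum₁, hP.sum_sum₁])
  have h₂ := relEntropy_nonneg hX.nonneg₂ (fun j k => hP₂ j k ▸ exp_pos _)
    (by rw [hX.sum_sum₂, hP.sum_sum₂])
  gcongr

theorem IsChainCoupling.transportCost_le [Nonempty m] [Nonempty n] [Nonempty p] (hε : 0 < ε)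
    (hP₁ : ∀ i j, P₁ i j = exp ((f i - g j - C₁ i j) / ε))
    (hP₂ : ∀ j k, P₂ j k = exp ((g j + h k - C₂ j k) / ε))
    (hP : IsChainCoupling a b P₁ P₂) (hX : IsChainCoupling a b X₁ X₂) (ha : ∑ i, a i = 1) :
    transportCost C₁ P₁ + transportCost C₂ P₂ ≤ transportCost C₁ X₁ + transportCost C₂ X₂
      + ε * log (Fintype.card m * Fintype.card n ^ 2 * Fintype.card p) := by
  have hb : ∑ k, b k = 1 := hP.sum_eq ▸ ha
  have key := hP.transportCost_add_negEntropy_le hε hP₁ hP₂ hX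
  have hX₁ := negEntropy_nonpos hX.nonneg₁ (hX.sum_sum₁.trans ha)
  have hX₂ := negEntropy_nonpos hX.nonneg₂ (hX.sum_sum₂.trans hb)
  have hP₁' := neg_log_card_le_negEntropy hP.nonneg₁ (hP.sum_sum₁.trans ha)
  have hP₂' := neg_log_card_le_negEntropy hP.nonneg₂ (hP.sum_sum₂.trans hb)
  have hlog : log (Fintype.card m * Fintype.card n ^ 2 * Fintype.card p : ℝ)
      = log (Fintype.card m * Fintype.card n) + log (Fintype.card n * Fintype.card p) := by
    rw [← log_mul (by positivity) (by positivity)]; ring_nf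
  have hX : ε * (negEntropy X₁ + negEntropy X₂) ≤ 0 :=
    mul_nonpos_of_nonneg_of_nonpos hε.le (by linarith)
  have hP : -(ε * (log (Fintype.card m * Fintype.card n) + log (Fintype.card n * Fintype.card p)))
      ≤ ε * (negEntropy P₁ + negEntropy P₂) := by
    rw [← mul_neg]; exact mul_le_mul_of_nonneg_left (by linarith) hε.le
  rw [hlog]
  linarith

theorem IsChainCoupling.transportCost_le_of_near [Nonempty m] [Nonempty n] [Nonempty p]
    (hε : 0 < ε) (hP₁ : ∀ i j, P₁ i j = exp ((f i - g j - C₁ i j) / ε))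
    (hP₂ : ∀ j k, P₂ j k = exp ((g j + h k - C₂ j k) / ε))
    {a' : m → ℝ} {b' : p → ℝ} (hP : IsChainCoupling a' b' P₁ P₂) (ha' : ∑ i, a' i = 1)
    (hX : IsChainCoupling a b X₁ X₂) (ha : ∑ i, a i = 1)
    {M : ℝ} (hC₁ : ∀ i j, |C₁ i j| ≤ M) (hC₂ : ∀ j k, |C₂ j k| ≤ M)
    {Pt₁ : Matrix m n ℝ} {Pt₂ : Matrix n p ℝ}
    (hPt₁ : ∑ i, ∑ j, |Pt₁ i j - P₁ i j| ≤ 2 * ∑ i, |a i - a' i|)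
    (hPt₂ : ∑ j, ∑ k, |Pt₂ j k - P₂ j k| ≤ 2 * ∑ k, |b k - b' k|) :
    transportCost C₁ Pt₁ + transportCost C₂ Pt₂ ≤ transportCost C₁ X₁ + transportCost C₂ X₂
      + ε * log (Fintype.card m * Fintype.card n ^ 2 * Fintype.card p)
      + 4 * M * (∑ i, |a i - a' i| + ∑ k, |b k - b' k|) := by
  have hM : 0 ≤ M := (abs_nonneg _).trans (hC₁ (Classical.arbitrary m) (Classical.arbitrary n))
  obtain ⟨R₁, R₂, hR, hRX⟩ := hX.exists_near hP.marginal_left_nonneg hP.marginal_right_nonneg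
    (ha'.trans ha.symm) (by rw [← hP.sum_eq, ← hX.sum_eq, ha, ha'])
  have hPR := hP.transportCost_le hε hP₁ hP₂ hR ha'
  have e₁ := transportCost_le_add (X := Pt₁) (Y := P₁) hC₁
  have e₂ := transportCost_le_add (X := Pt₂) (Y := P₂) hC₂
  have e₃ := transportCost_le_add (X := R₁) (Y := X₁) hC₁
  have e₄ := transportCost_le_add (X := R₂) (Y := X₂) hC₂
  linarith [mul_le_mul_of_nonneg_left hPt₁ hM, mul_le_mul_of_nonneg_left hPt₂ hM,
    mul_le_mul_of_nonneg_left hRX hM]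

end Gibbs

theorem sum_abs_sub_le_two_mul_sum_abs_sub_mul {ι : Type*} [Fintype ι] {a a' : ι → ℝ}
    (ha' : ∀ i, 0 ≤ a' i) (hsum : ∑ i, a' i = ∑ i, a i) (ρ : ℝ) :
    ∑ i, |a i - a' i| ≤ 2 * ∑ i, |a i - ρ * a' i| := by
  have hmass : |1 - ρ| * ∑ i, a' i ≤ ∑ i, |a i - ρ * a' i| :=
    calc |1 - ρ| * ∑ i, a' i = |∑ i, (a i - ρ * a' i)| := by
          rw [sum_sub_distrib, ← mul_sum, ← hsum, ← one_sub_mul, abs_mul,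
            abs_of_nonneg (sum_nonneg fun i _ => ha' i)]
      _ ≤ ∑ i, |a i - ρ * a' i| := abs_sum_le_sum_abs _ _
  have key : ∀ i, |a i - a' i| ≤ |a i - ρ * a' i| + |1 - ρ| * a' i := fun i =>
    calc |a i - a' i| = |(a i - ρ * a' i) + -((1 - ρ) * a' i)| := by congr 1; ring
      _ ≤ |a i - ρ * a' i| + |-((1 - ρ) * a' i)| := abs_add_le _ _
      _ = |a i - ρ * a' i| + |1 - ρ| * a' i := by rw [abs_neg, abs_mul, abs_of_nonneg (ha' i)]
  calc ∑ i, |a i - a' i| ≤ ∑ i, (|a i - ρ * a' i| + |1 - ρ| * a' i) :=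
        sum_le_sum fun i _ => key i
    _ = ∑ i, |a i - ρ * a' i| + |1 - ρ| * ∑ i, a' i := by rw [sum_add_distrib, mul_sum]
    _ ≤ 2 * ∑ i, |a i - ρ * a' i| := by linarith

theorem abs_le_linf {m n : ℕ} (X : Matrix (Fin m) (Fin n) ℝ) (i : Fin m) (j : Fin n) :
    |X i j| ≤ linf X :=
  le_ciSup (f := fun q : Fin m × Fin n => |X q.1 q.2|) (Set.finite_range _).bddAbove (i, j)

theorem mulVec_pos_of_pos {m n : Type*} [Fintype n] [Nonempty n] {A : Matrix m n ℝ}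
    {v : n → ℝ} (hA : ∀ i j, 0 < A i j) (hv : ∀ j, 0 < v j) (i : m) : 0 < (A *ᵥ v) i :=
  sum_pos (fun j _ => mul_pos (hA i j) (hv j)) univ_nonempty

theorem sq_mul_mulVec_eq_transpose_mulVec {m n p : Type*} [Fintype m] [Fintype p]
    {K₁ : Matrix m n ℝ} {K₂ : Matrix n p ℝ} {x : m → ℝ} {v : n → ℝ} {w : p → ℝ}
    (hK₁ : ∀ i j, 0 ≤ K₁ i j) (hx : ∀ i, 0 ≤ x i)
    (hKw : ∀ j, 0 < (K₂ *ᵥ w) j) (hv : v = fun j => sqrt ((K₁ᵀ *ᵥ x) j / (K₂ *ᵥ w) j))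
    (j : n) : v j ^ 2 * (K₂ *ᵥ w) j = (K₁ᵀ *ᵥ x) j := by
  have hK₁x : 0 ≤ (K₁ᵀ *ᵥ x) j := sum_nonneg fun i _ => mul_nonneg (hK₁ i j) (hx i)
  rw [hv, sq_sqrt (div_nonneg hK₁x (hKw j).le), div_mul_cancel₀ _ (hKw j).ne']

section Sinkhorn

variable {m n p : Type*} [Fintype m] [Fintype n] [Fintype p]
  {K₁ : Matrix m n ℝ} {K₂ : Matrix n p ℝ}

theorem sinkhorn_iterate_pos [Nonempty m] [Nonempty n] [Nonempty p]
    (hK₁ : ∀ i j, 0 < K₁ i j) (hK₂ : ∀ j k, 0 < K₂ j k)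
    {a : m → ℝ} {b : p → ℝ} (ha : ∀ i, 0 < a i) (hb : ∀ k, 0 < b k)
    {u₁ : ℕ → m → ℝ} {u₂ : ℕ → n → ℝ} {u₃ : ℕ → p → ℝ}
    (hinit₁ : u₁ 0 = fun _ => 1 / ∑ i, ∑ j, K₁ i j) (hinit₂ : u₂ 0 = fun _ => 1)
    (hinit₃ : u₃ 0 = fun _ => 1 / ∑ j, ∑ k, K₂ j k)
    (hrec₂ : ∀ t, u₂ (t+1) = fun j => sqrt ((K₁ᵀ *ᵥ u₁ t) j / (K₂ *ᵥ u₃ t) j))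
    (hrec₁ : ∀ t, u₁ (t+1) = fun i => a i / (K₁ *ᵥ fun j => (u₂ (t+1) j)⁻¹) i)
    (hrec₃ : ∀ t, u₃ (t+1) = fun k => b k / (K₂ᵀ *ᵥ u₂ (t+1)) k) (t : ℕ) :
    (∀ i, 0 < u₁ t i) ∧ (∀ j, 0 < u₂ t j) ∧ (∀ k, 0 < u₃ t k) := by
  induction t with
  | zero =>
    refine ⟨fun i => ?_, fun j => ?_, fun k => ?_⟩ <;> simp only [hinit₁, hinit₂, hinit₃]
    · exact one_div_pos.2 (sum_pos (fun i _ => sum_pos (fun j _ => hK₁ i j) univ_nonempty)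
        univ_nonempty)
    · exact one_pos
    · exact one_div_pos.2 (sum_pos (fun j _ => sum_pos (fun k _ => hK₂ j k) univ_nonempty)
        univ_nonempty)
  | succ t ih =>
    have hv : ∀ j, 0 < u₂ (t+1) j := fun j => by
      rw [hrec₂]
      exact sqrt_pos.2 (div_pos (mulVec_pos_of_pos (fun j i => hK₁ i j) ih.1 j)
        (mulVec_pos_of_pos hK₂ ih.2.2 j))
    refine ⟨fun i => ?_, hv, fun k => ?_⟩
    · rw [hrec₁]; exact div_pos (ha i) (mulVec_pos_of_pos hK₁ (fun j => inv_pos.2 (hv j)) i)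
    · rw [hrec₃]; exact div_pos (hb k) (mulVec_pos_of_pos (fun k j => hK₂ j k) hv k)

variable {x : m → ℝ} {v : n → ℝ} {w : p → ℝ} {ρ : ℝ}
  {Ph₁ : Matrix m n ℝ} {Ph₂ : Matrix n p ℝ}

theorem isChainCoupling_halfStep (hK₁ : ∀ i j, 0 ≤ K₁ i j) (hK₂ : ∀ j k, 0 ≤ K₂ j k)
    (hx : ∀ i, 0 ≤ x i) (hv : ∀ j, 0 < v j) (hw : ∀ k, 0 ≤ w k) (hρ : 0 < ρ)
    (hbal : ∀ j, v j ^ 2 * (K₂ *ᵥ w) j = (K₁ᵀ *ᵥ x) j)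
    (hPh₁ : ∀ i j, Ph₁ i j = x i / ρ * K₁ i j * (v j)⁻¹)
    (hPh₂ : ∀ j k, Ph₂ j k = v j * K₂ j k * (w k / ρ)) :
    IsChainCoupling (Ph₁ *ᵥ fun _ => 1) (Ph₂ᵀ *ᵥ fun _ => 1) Ph₁ Ph₂ := by
  refine .of_mulVec (fun i j => ?_) (fun j k => ?_) rfl rfl (funext fun j => ?_)
  · rw [hPh₁]
    exact mul_nonneg (mul_nonneg (div_nonneg (hx i) hρ.le) (hK₁ i j)) (inv_nonneg.2 (hv j).le)
  · rw [hPh₂]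
    exact mul_nonneg (mul_nonneg (hv j).le (hK₂ j k)) (div_nonneg (hw k) hρ.le)
  have hbalj := hbal j
  simp only [mulVec, dotProduct, transpose_apply, mul_one, hPh₁, hPh₂] at hbalj ⊢
  have hvj := (hv j).ne'
  calc ∑ i, x i / ρ * K₁ i j * (v j)⁻¹ = (∑ i, K₁ i j * x i) / (ρ * v j) := by
        rw [sum_div]; exact sum_congr rfl fun i _ => by field_simp
    _ = v j * (∑ k, K₂ j k * w k) / ρ := by rw [← hbalj]; field_simp
    _ = ∑ k, v j * K₂ j k * (w k / ρ) := by
        rw [mul_sum, sum_div]; exact sum_congr rfl fun k _ => by ring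

theorem sum_sum_halfStep (hρ : ρ = ∑ i, ∑ j, x i * K₁ i j * (v j)⁻¹) (hρ₀ : ρ ≠ 0)
    (hPh₁ : ∀ i j, Ph₁ i j = x i / ρ * K₁ i j * (v j)⁻¹) : ∑ i, ∑ j, Ph₁ i j = 1 := by
  simp only [hPh₁]
  calc ∑ i, ∑ j, x i / ρ * K₁ i j * (v j)⁻¹ = (∑ i, ∑ j, x i * K₁ i j * (v j)⁻¹) / ρ := by
        rw [sum_div]; exact sum_congr rfl fun i _ => by
          rw [sum_div]; exact sum_congr rfl fun j _ => by ring
    _ = 1 := by rw [← hρ, div_self hρ₀]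

end Sinkhorn

section HalfStepGibbs

variable {m n p : Type*} {K₁ : Matrix m n ℝ} {K₂ : Matrix n p ℝ} {x : m → ℝ} {v : n → ℝ}
  {w : p → ℝ} {ρ ε : ℝ} {Ph₁ : Matrix m n ℝ} {Ph₂ : Matrix n p ℝ}

theorem halfStep_left_eq_exp {C₁ : Matrix m n ℝ} (hε : ε ≠ 0)
    (hK₁ : ∀ i j, K₁ i j = exp (-C₁ i j / ε)) (hx : ∀ i, 0 < x i) (hv : ∀ j, 0 < v j)
    (hρ : 0 < ρ) (hPh₁ : ∀ i j, Ph₁ i j = x i / ρ * K₁ i j * (v j)⁻¹) (i : m) (j : n) :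
    Ph₁ i j = exp ((ε * log (x i / ρ) - ε * log (v j) - C₁ i j) / ε) := by
  rw [hPh₁, hK₁, show (ε * log (x i / ρ) - ε * log (v j) - C₁ i j) / ε
      = log (x i / ρ) + -C₁ i j / ε + log (v j)⁻¹ by rw [log_inv]; field_simp; ring,
    exp_add, exp_add, exp_log (div_pos (hx i) hρ), exp_log (inv_pos.2 (hv j))]

theorem halfStep_right_eq_exp {C₂ : Matrix n p ℝ} (hε : ε ≠ 0)
    (hK₂ : ∀ j k, K₂ j k = exp (-C₂ j k / ε)) (hv : ∀ j, 0 < v j) (hw : ∀ k, 0 < w k)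
    (hρ : 0 < ρ) (hPh₂ : ∀ j k, Ph₂ j k = v j * K₂ j k * (w k / ρ)) (j : n) (k : p) :
    Ph₂ j k = exp ((ε * log (v j) + ε * log (w k / ρ) - C₂ j k) / ε) := by
  rw [hPh₂, hK₂, show (ε * log (v j) + ε * log (w k / ρ) - C₂ j k) / ε
      = log (v j) + -C₂ j k / ε + log (w k / ρ) by field_simp; ring,
    exp_add, exp_add, exp_log (hv j), exp_log (div_pos (hw k) hρ)]

end HalfStepGibbs

section StoppingCriterion

variable {m₁ m₂ m₃ : ℕ} {K₁ : Matrix (Fin m₁) (Fin m₂) ℝ} {K₂ : Matrix (Fin m₂) (Fin m₃) ℝ}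
  {x : Fin m₁ → ℝ} {v v' : Fin m₂ → ℝ} {w : Fin m₃ → ℝ} {ρ : ℝ}

theorem indMat1_apply (i : Fin m₁) (j : Fin m₂) :
    indMat1 x K₁ v i j = x i * K₁ i j * (v j)⁻¹ := by
  rw [indMat1, mul_diagonal, diagonal_mul]

theorem indMat2_apply (j : Fin m₂) (k : Fin m₃) :
    indMat2 v K₂ w j k = v j * K₂ j k * w k := by
  rw [indMat2, mul_diagonal, diagonal_mul]

theorem sqrt_div_indMat_eq_div {j : Fin m₂} (hv : 0 < v j) (hv' : 0 < v' j)
    (hKw : 0 < (K₂ *ᵥ w) j) (hbal : v' j ^ 2 * (K₂ *ᵥ w) j = (K₁ᵀ *ᵥ x) j) :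
    sqrt ((indMat2 v K₂ w *ᵥ fun _ => 1) j / ((indMat1 x K₁ v)ᵀ *ᵥ fun _ => 1) j)
      = v j / v' j := by
  have e₁ : (indMat2 v K₂ w *ᵥ fun _ => 1) j = v j * (K₂ *ᵥ w) j := by
    simp only [mulVec, dotProduct, indMat2_apply, mul_one, mul_sum, mul_assoc]
  have e₂ : ((indMat1 x K₁ v)ᵀ *ᵥ fun _ => 1) j = (K₁ᵀ *ᵥ x) j / v j := by
    simp only [mulVec, dotProduct, transpose_apply, indMat1_apply, mul_one, sum_div]
    exact sum_congr rfl fun i _ => by ring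
  rw [e₁, e₂, ← hbal, show v j * (K₂ *ᵥ w) j / (v' j ^ 2 * (K₂ *ᵥ w) j / v j)
      = (v j / v' j) ^ 2 by field_simp, sqrt_sq (div_pos hv hv').le]

theorem indMat1_mulVec_div (hv : ∀ j, v j ≠ 0) (hρ : ρ ≠ 0) {Ph₁ : Matrix (Fin m₁) (Fin m₂) ℝ}
    (hPh₁ : ∀ i j, Ph₁ i j = x i / ρ * K₁ i j * (v' j)⁻¹) (i : Fin m₁) :
    (indMat1 x K₁ v *ᵥ fun j => v j / v' j) i = ρ * (Ph₁ *ᵥ fun _ => 1) i := by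
  simp only [mulVec, dotProduct, indMat1_apply, mul_one, mul_sum, hPh₁]
  exact sum_congr rfl fun j _ => by have := hv j; field_simp

theorem indMat2_transpose_mulVec_div (hv : ∀ j, v j ≠ 0) (hρ : ρ ≠ 0)
    {Ph₂ : Matrix (Fin m₂) (Fin m₃) ℝ} (hPh₂ : ∀ j k, Ph₂ j k = v' j * K₂ j k * (w k / ρ))
    (k : Fin m₃) :
    ((indMat2 v K₂ w)ᵀ *ᵥ fun j => (v j / v' j)⁻¹) k = ρ * (Ph₂ᵀ *ᵥ fun _ => 1) k := by
  simp only [mulVec, dotProduct, transpose_apply, indMat2_apply, mul_one, mul_sum, hPh₂]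
  exact sum_congr rfl fun j _ => by have := hv j; field_simp

end StoppingCriterion

theorem sinkhorn_approximation_guarantee_M2_general
    {m1 m2 m3 : ℕ} (hm1 : 0 < m1) (hm2 : 0 < m2) (hm3 : 0 < m3)
    (C1 : Matrix (Fin m1) (Fin m2) ℝ) (C2 : Matrix (Fin m2) (Fin m3) ℝ)
    (a : Fin m1 → ℝ) (b : Fin m3 → ℝ)
    (ha : ∀ j, 0 < a j) (hb : ∀ l, 0 < b l)
    (hasum : ∑ j, a j = 1) (hbsum : ∑ l, b l = 1)
    (δ : ℝ) (hδ : 0 < δ)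
    (hdim : 2 ≤ m1 * m2 ^ 2 * m3)
    (hCpos : 0 < max (linf C1) (linf C2))
    (ε : ℝ) (hε : ε = δ / (2 * Real.log ((m1 * m2 ^ 2 * m3 : ℕ) : ℝ)))
    (K1 : Matrix (Fin m1) (Fin m2) ℝ) (K2 : Matrix (Fin m2) (Fin m3) ℝ)
    (hK1 : ∀ j k, K1 j k = Real.exp (-C1 j k / ε))
    (hK2 : ∀ k l, K2 k l = Real.exp (-C2 k l / ε))
    (u1 : ℕ → Fin m1 → ℝ) (u2 : ℕ → Fin m2 → ℝ) (u3 : ℕ → Fin m3 → ℝ)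
    (hinit1 : u1 0 = fun _ => 1 / (∑ j, ∑ k, K1 j k))
    (hinit2 : u2 0 = fun _ => 1)
    (hinit3 : u3 0 = fun _ => 1 / (∑ k, ∑ l, K2 k l))
    (hrec2 : ∀ n, u2 (n+1) = fun k => Real.sqrt ((K1ᵀ *ᵥ u1 n) k / (K2 *ᵥ u3 n) k))
    (hrec1 : ∀ n, u1 (n+1) = fun j => a j / (K1 *ᵥ fun k => (u2 (n+1) k)⁻¹) j)
    (hrec3 : ∀ n, u3 (n+1) = fun l => b l / (K2ᵀ *ᵥ u2 (n+1)) l)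
    (n : ℕ)
    (r : Fin m2 → ℝ)
    (hr : r = fun k => Real.sqrt
      (((indMat2 (u2 n) K2 (u3 n)) *ᵥ fun _ => 1) k /
        (((indMat1 (u1 n) K1 (u2 n))ᵀ *ᵥ fun _ => 1) k)))
    (hstop : (∑ j, |a j - (indMat1 (u1 n) K1 (u2 n) *ᵥ r) j|)
        + (∑ l, |b l - ((indMat2 (u2 n) K2 (u3 n))ᵀ *ᵥ fun k => (r k)⁻¹) l|)
      ≤ δ / (16 * max (linf C1) (linf C2)))
    (ρ : ℝ) (hρ : ρ = ∑ j, ∑ k, u1 n j * K1 j k * (u2 (n+1) k)⁻¹)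
    (Ph1 : Matrix (Fin m1) (Fin m2) ℝ) (Ph2 : Matrix (Fin m2) (Fin m3) ℝ)
    (hPh1 : Ph1 = fun j k => (u1 n j / ρ) * K1 j k * (u2 (n+1) k)⁻¹)
    (hPh2 : Ph2 = fun k l => u2 (n+1) k * K2 k l * (u3 n l / ρ))
    (a' : Fin m1 → ℝ) (b' : Fin m3 → ℝ)
    (ha' : a' = Ph1 *ᵥ fun _ => 1) (hb' : b' = Ph2ᵀ *ᵥ fun _ => 1)
    (Pt1 : Matrix (Fin m1) (Fin m2) ℝ) (Pt2 : Matrix (Fin m2) (Fin m3) ℝ)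
    (hPt1err : (∑ j, ∑ k, |Pt1 j k - Ph1 j k|) ≤ 2 * ∑ j, |a j - a' j|)
    (hPt2err : (∑ k, ∑ l, |Pt2 k l - Ph2 k l|) ≤ 2 * ∑ l, |b l - b' l|) :
    ∀ (Q1 : Matrix (Fin m1) (Fin m2) ℝ) (Q2 : Matrix (Fin m2) (Fin m3) ℝ),
      (∀ j k, 0 ≤ Q1 j k) → (∀ k l, 0 ≤ Q2 k l) →
      (Q1 *ᵥ fun _ => 1) = a → (Q2ᵀ *ᵥ fun _ => 1) = b →
      (Q1ᵀ *ᵥ fun _ => 1) = (Q2 *ᵥ fun _ => 1) →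
      (∑ j, ∑ k, C1 j k * Pt1 j k) + (∑ k, ∑ l, C2 k l * Pt2 k l) ≤
        (∑ j, ∑ k, C1 j k * Q1 j k) + (∑ k, ∑ l, C2 k l * Q2 k l) + δ := by
  intro Q1 Q2 hQ1nn hQ2nn hQ1a hQ2b hQmid
  have hQ := IsChainCoupling.of_mulVec hQ1nn hQ2nn hQ1a hQ2b hQmid
  have : Nonempty (Fin m1) := ⟨⟨0, hm1⟩⟩
  have : Nonempty (Fin m2) := ⟨⟨0, hm2⟩⟩
  have : Nonempty (Fin m3) := ⟨⟨0, hm3⟩⟩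
  set M := max (linf C1) (linf C2)
  have hlogN : 0 < log ((m1 * m2 ^ 2 * m3 : ℕ) : ℝ) := log_pos (by exact_mod_cast hdim)
  have hεpos : 0 < ε := hε ▸ by positivity
  have hK1pos : ∀ j k, 0 < K1 j k := fun j k => hK1 j k ▸ exp_pos _
  have hK2pos : ∀ k l, 0 < K2 k l := fun k l => hK2 k l ▸ exp_pos _
  have hpos := sinkhorn_iterate_pos hK1pos hK2pos ha hb hinit1 hinit2 hinit3 hrec2 hrec1 hrec3
  obtain ⟨hu1, hu2, hu3⟩ := hpos n
  have hu2' := (hpos (n + 1)).2.1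
  have hKu3 := mulVec_pos_of_pos hK2pos hu3
  have hbal := sq_mul_mulVec_eq_transpose_mulVec (fun j k => (hK1pos j k).le)
    (fun j => (hu1 j).le) hKu3 (hrec2 n)
  have hρpos : 0 < ρ := hρ ▸ sum_pos (fun j _ => sum_pos (fun k _ =>
    mul_pos (mul_pos (hu1 j) (hK1pos j k)) (inv_pos.2 (hu2' k))) univ_nonempty) univ_nonempty
  have hPh1e := congr_fun₂ hPh1
  have hPh2e := congr_fun₂ hPh2
  have hPh : IsChainCoupling a' b' Ph1 Ph2 := ha' ▸ hb' ▸ isChainCoupling_halfStep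
    (fun j k => (hK1pos j k).le) (fun k l => (hK2pos k l).le) (fun j => (hu1 j).le) hu2'
    (fun l => (hu3 l).le) hρpos hbal hPh1e hPh2e
  have ha'sum : ∑ j, a' j = 1 := hPh.sum_sum₁ ▸ sum_sum_halfStep hρ hρpos.ne' hPh1e
  have hr' : r = fun k => u2 n k / u2 (n+1) k :=
    hr ▸ funext fun k => sqrt_div_indMat_eq_div (hu2 k) (hu2' k) (hKu3 k) (hbal k)
  simp only [hr', indMat1_mulVec_div (fun k => (hu2 k).ne') hρpos.ne' hPh1e,
    indMat2_transpose_mulVec_div (fun k => (hu2 k).ne') hρpos.ne' hPh2e, ← ha', ← hb'] at hstop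
  have hA := sum_abs_sub_le_two_mul_sum_abs_sub_mul hPh.marginal_left_nonneg
    (ha'sum.trans hasum.symm) ρ
  have hB := sum_abs_sub_le_two_mul_sum_abs_sub_mul (a := b) hPh.marginal_right_nonneg
    (by linarith [hPh.sum_eq]) ρ
  have hMAB : 4 * M * (∑ j, |a j - a' j| + ∑ l, |b l - b' l|) ≤ δ / 2 :=
    calc _ ≤ 4 * M * (2 * (δ / (16 * M))) := by gcongr; linarith
      _ = δ / 2 := by field_simp; ring
  have hεlog : ε * log ((m1 * m2 ^ 2 * m3 : ℕ) : ℝ) = δ / 2 := by rw [hε]; field_simp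
  have key := hPh.transportCost_le_of_near hεpos
    (halfStep_left_eq_exp hεpos.ne' hK1 hu1 hu2' hρpos hPh1e)
    (halfStep_right_eq_exp hεpos.ne' hK2 hu2' hu3 hρpos hPh2e) ha'sum hQ hasum
    (fun j k => (abs_le_linf C1 j k).trans (le_max_left _ _))
    (fun k l => (abs_le_linf C2 k l).trans (le_max_right _ _)) hPt1err hPt2err
  simp only [transportCost, Fintype.card_fin] at key
  push_cast at hεlog
  linarith

/-- **Approximation guarantee of the Sinkhorn algorithm for `M = 2`** (Thm. 4.8):
with `ε = δ/(2 log(m₁m₂²m₃))`, if the stopping criterion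
`S_n ≤ δ/(16 max(‖C¹‖_∞,‖C²‖_∞))` holds at step `n`, then any feasible pair obtained by
rounding the normalized half-step matrices is `δ`-optimal for the (unregularized)
sequentially composed optimal transport problem. -/
theorem sinkhorn_approximation_guarantee_M2
    {m1 m2 m3 : ℕ} (hm1 : 0 < m1) (hm2 : 0 < m2) (hm3 : 0 < m3)
    (C1 : Matrix (Fin m1) (Fin m2) ℝ) (C2 : Matrix (Fin m2) (Fin m3) ℝ)
    (hC1 : ∀ j k, 0 ≤ C1 j k) (hC2 : ∀ k l, 0 ≤ C2 k l)
    (a : Fin m1 → ℝ) (b : Fin m3 → ℝ)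
    (ha : ∀ j, 0 < a j) (hb : ∀ l, 0 < b l)
    (hasum : ∑ j, a j = 1) (hbsum : ∑ l, b l = 1)
    (δ : ℝ) (hδ : 0 < δ)
    (hdim : 2 ≤ m1 * m2 ^ 2 * m3)
    (hCpos : 0 < max (linf C1) (linf C2))
    (ε : ℝ) (hε : ε = δ / (2 * Real.log ((m1 * m2 ^ 2 * m3 : ℕ) : ℝ)))
    (K1 : Matrix (Fin m1) (Fin m2) ℝ) (K2 : Matrix (Fin m2) (Fin m3) ℝ)
    (hK1 : ∀ j k, K1 j k = Real.exp (-C1 j k / ε))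
    (hK2 : ∀ k l, K2 k l = Real.exp (-C2 k l / ε))
    (u1 : ℕ → Fin m1 → ℝ) (u2 : ℕ → Fin m2 → ℝ) (u3 : ℕ → Fin m3 → ℝ)
    (hinit1 : u1 0 = fun _ => 1 / (∑ j, ∑ k, K1 j k))
    (hinit2 : u2 0 = fun _ => 1)
    (hinit3 : u3 0 = fun _ => 1 / (∑ k, ∑ l, K2 k l))
    (hrec2 : ∀ n, u2 (n+1) = fun k => Real.sqrt ((K1ᵀ *ᵥ u1 n) k / (K2 *ᵥ u3 n) k))
    (hrec1 : ∀ n, u1 (n+1) = fun j => a j / (K1 *ᵥ fun k => (u2 (n+1) k)⁻¹) j)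
    (hrec3 : ∀ n, u3 (n+1) = fun l => b l / (K2ᵀ *ᵥ u2 (n+1)) l)
    (n : ℕ)
    (r : Fin m2 → ℝ)
    (hr : r = fun k => Real.sqrt
      (((indMat2 (u2 n) K2 (u3 n)) *ᵥ fun _ => 1) k /
        (((indMat1 (u1 n) K1 (u2 n))ᵀ *ᵥ fun _ => 1) k)))
    (hstop : (∑ j, |a j - (indMat1 (u1 n) K1 (u2 n) *ᵥ r) j|)
        + (∑ l, |b l - ((indMat2 (u2 n) K2 (u3 n))ᵀ *ᵥ fun k => (r k)⁻¹) l|)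
      ≤ δ / (16 * max (linf C1) (linf C2)))
    (ρ : ℝ) (hρ : ρ = ∑ j, ∑ k, u1 n j * K1 j k * (u2 (n+1) k)⁻¹)
    (Ph1 : Matrix (Fin m1) (Fin m2) ℝ) (Ph2 : Matrix (Fin m2) (Fin m3) ℝ)
    (hPh1 : Ph1 = fun j k => (u1 n j / ρ) * K1 j k * (u2 (n+1) k)⁻¹)
    (hPh2 : Ph2 = fun k l => u2 (n+1) k * K2 k l * (u3 n l / ρ))
    (a' : Fin m1 → ℝ) (b' : Fin m3 → ℝ)
    (ha' : a' = Ph1 *ᵥ fun _ => 1) (hb' : b' = Ph2ᵀ *ᵥ fun _ => 1)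
    (Pt1 : Matrix (Fin m1) (Fin m2) ℝ) (Pt2 : Matrix (Fin m2) (Fin m3) ℝ)
    (hPt1nn : ∀ j k, 0 ≤ Pt1 j k) (hPt2nn : ∀ k l, 0 ≤ Pt2 k l)
    (hPt1a : (Pt1 *ᵥ fun _ => 1) = a) (hPt2b : (Pt2ᵀ *ᵥ fun _ => 1) = b)
    (hPtmid : (Pt1ᵀ *ᵥ fun _ => 1) = (Pt2 *ᵥ fun _ => 1))
    (hPt1err : (∑ j, ∑ k, |Pt1 j k - Ph1 j k|) ≤ 2 * ∑ j, |a j - a' j|)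
    (hPt2err : (∑ k, ∑ l, |Pt2 k l - Ph2 k l|) ≤ 2 * ∑ l, |b l - b' l|) :
    ∀ (Q1 : Matrix (Fin m1) (Fin m2) ℝ) (Q2 : Matrix (Fin m2) (Fin m3) ℝ),
      (∀ j k, 0 ≤ Q1 j k) → (∀ k l, 0 ≤ Q2 k l) →
      (Q1 *ᵥ fun _ => 1) = a → (Q2ᵀ *ᵥ fun _ => 1) = b →
      (Q1ᵀ *ᵥ fun _ => 1) = (Q2 *ᵥ fun _ => 1) →
      (∑ j, ∑ k, C1 j k * Pt1 j k) + (∑ k, ∑ l, C2 k l * Pt2 k l) ≤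
        (∑ j, ∑ k, C1 j k * Q1 j k) + (∑ k, ∑ l, C2 k l * Q2 k l) + δ :=
  sinkhorn_approximation_guarantee_M2_general hm1 hm2 hm3 C1 C2 a b ha hb hasum hbsum δ hδ hdim
    hCpos ε hε K1 K2 hK1 hK2 u1 u2 u3 hinit1 hinit2 hinit3 hrec2 hrec1 hrec3 n r hr hstop ρ hρ Ph1
    Ph2 hPh1 hPh2 a' b' ha' hb' Pt1 Pt2 hPt1err hPt2err
end
end

section
/- For every n ∈ ℕ, the Sinkhorn iterates satisfy ‖P^(n+1,2)1_{m3} − (P^(n+1,1))ᵀ1_{m1}‖₁ ≤ ‖a − P^(n,1) r_n‖₁ + ‖b − (P^(n,2))ᵀ(1/r_n)‖₁, where r_n := ((P^(n,2)1_{m3}) / ((P^(n,1))ᵀ1_{m1}))^{1/2} with quotient and square root entrywise. -/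
open Matrix Finset Real

noncomputable section

lemma indMat1_apply_s15 {m1 m2 : ℕ} (u : Fin m1 → ℝ) (K : Matrix (Fin m1) (Fin m2) ℝ)
    (v : Fin m2 → ℝ) (j : Fin m1) (k : Fin m2) :
    indMat1 u K v j k = u j * K j k * (v k)⁻¹ := by
  simp [indMat1, Matrix.mul_apply, Matrix.diagonal_apply]

lemma indMat2_apply_s15 {m2 m3 : ℕ} (v : Fin m2 → ℝ) (K : Matrix (Fin m2) (Fin m3) ℝ)
    (w : Fin m3 → ℝ) (k : Fin m2) (l : Fin m3) :
    indMat2 v K w k l = v k * K k l * w l := by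
  simp [indMat2, Matrix.mul_apply, Matrix.diagonal_apply]

/-- **Stopping-criterion comparison, other direction** (Lem. 4.10):
`‖P^{n+1,2}1 − (P^{n+1,1})ᵀ1‖₁ ≤ ‖a − P^{n,1}r_n‖₁ + ‖b − (P^{n,2})ᵀ(1/r_n)‖₁`. -/
theorem sinkhorn_stopping_criteria_diff2
    {m1 m2 m3 : ℕ} (hm1 : 0 < m1) (hm2 : 0 < m2) (hm3 : 0 < m3)
    (C1 : Matrix (Fin m1) (Fin m2) ℝ) (C2 : Matrix (Fin m2) (Fin m3) ℝ)
    (hC1 : ∀ j k, 0 ≤ C1 j k) (hC2 : ∀ k l, 0 ≤ C2 k l)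
    (a : Fin m1 → ℝ) (b : Fin m3 → ℝ)
    (ha : ∀ j, 0 < a j) (hb : ∀ l, 0 < b l)
    (hasum : ∑ j, a j = 1) (hbsum : ∑ l, b l = 1)
    (ε : ℝ) (hε : 0 < ε)
    (K1 : Matrix (Fin m1) (Fin m2) ℝ) (K2 : Matrix (Fin m2) (Fin m3) ℝ)
    (hK1 : ∀ j k, K1 j k = Real.exp (-C1 j k / ε))
    (hK2 : ∀ k l, K2 k l = Real.exp (-C2 k l / ε))
    (u1 : ℕ → Fin m1 → ℝ) (u2 : ℕ → Fin m2 → ℝ) (u3 : ℕ → Fin m3 → ℝ)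
    (h01 : ∀ j, 0 < u1 0 j) (h02 : ∀ k, 0 < u2 0 k) (h03 : ∀ l, 0 < u3 0 l)
    (hrec2 : ∀ n, u2 (n+1) = fun k => Real.sqrt ((K1ᵀ *ᵥ u1 n) k / (K2 *ᵥ u3 n) k))
    (hrec1 : ∀ n, u1 (n+1) = fun j => a j / (K1 *ᵥ fun k => (u2 (n+1) k)⁻¹) j)
    (hrec3 : ∀ n, u3 (n+1) = fun l => b l / (K2ᵀ *ᵥ u2 (n+1)) l)
    (r : ℕ → Fin m2 → ℝ)
    (hr : ∀ n, r n = fun k => Real.sqrt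
      (((indMat2 (u2 n) K2 (u3 n)) *ᵥ fun _ => 1) k /
        (((indMat1 (u1 n) K1 (u2 n))ᵀ *ᵥ fun _ => 1) k))) :
    ∀ n : ℕ,
      (∑ k, |(indMat2 (u2 (n+1)) K2 (u3 (n+1)) *ᵥ fun _ => 1) k
          - ((indMat1 (u1 (n+1)) K1 (u2 (n+1)))ᵀ *ᵥ fun _ => 1) k|)
        ≤ (∑ j, |a j - (indMat1 (u1 n) K1 (u2 n) *ᵥ r n) j|)
          + ∑ l, |b l - ((indMat2 (u2 n) K2 (u3 n))ᵀ *ᵥ fun k => (r n k)⁻¹) l| := by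
  have hK1pos : ∀ j k, 0 < K1 j k := fun j k => (hK1 j k) ▸ Real.exp_pos _
  have hK2pos : ∀ k l, 0 < K2 k l := fun k l => (hK2 k l) ▸ Real.exp_pos _
  haveI : Nonempty (Fin m1) := Fin.pos_iff_nonempty.mp hm1
  haveI : Nonempty (Fin m2) := Fin.pos_iff_nonempty.mp hm2
  haveI : Nonempty (Fin m3) := Fin.pos_iff_nonempty.mp hm3
  have hpos : ∀ n, (∀ j, 0 < u1 n j) ∧ (∀ k, 0 < u2 n k) ∧ (∀ l, 0 < u3 n l) := by
    intro n
    induction n with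
    | zero => exact ⟨h01, h02, h03⟩
    | succ n ih =>
      obtain ⟨ih1, ih2, ih3⟩ := ih
      have h2 : ∀ k, 0 < u2 (n+1) k := by
        intro k
        rw [hrec2]
        apply Real.sqrt_pos.mpr
        apply div_pos
        · have : 0 < ∑ j, K1 j k * u1 n j :=
            Finset.sum_pos (fun j _ => mul_pos (hK1pos j k) (ih1 j)) Finset.univ_nonempty
          simpa [Matrix.mulVec, dotProduct, Matrix.transpose_apply] using this
        · have : 0 < ∑ l, K2 k l * u3 n l :=
            Finset.sum_pos (fun l _ => mul_pos (hK2pos k l) (ih3 l)) Finset.univ_nonempty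
          simpa [Matrix.mulVec, dotProduct] using this
      refine ⟨?_, h2, ?_⟩
      · intro j
        rw [hrec1]
        apply div_pos (ha j)
        have : 0 < ∑ k, K1 j k * (u2 (n+1) k)⁻¹ :=
          Finset.sum_pos (fun k _ => mul_pos (hK1pos j k) (inv_pos.mpr (h2 k)))
            Finset.univ_nonempty
        simpa [Matrix.mulVec, dotProduct] using this
      · intro l
        rw [hrec3]
        apply div_pos (hb l)
        have : 0 < ∑ k, K2 k l * u2 (n+1) k :=
          Finset.sum_pos (fun k _ => mul_pos (hK2pos k l) (h2 k)) Finset.univ_nonempty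
        simpa [Matrix.mulVec, dotProduct, Matrix.transpose_apply] using this
  intro n
  obtain ⟨h1n, h2n, h3n⟩ := hpos n
  obtain ⟨h1n', h2n', h3n'⟩ := hpos (n+1)
  set S1 : Fin m2 → ℝ := fun k => ∑ j, K1 j k * u1 n j with hS1def
  set S2 : Fin m2 → ℝ := fun k => ∑ l, K2 k l * u3 n l with hS2def
  set T : Fin m1 → ℝ := fun j => ∑ k, K1 j k * (u2 (n+1) k)⁻¹ with hTdef
  set S : Fin m3 → ℝ := fun l => ∑ k, K2 k l * u2 (n+1) k with hSdef
  have hS1pos : ∀ k, 0 < S1 k := fun k =>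
    Finset.sum_pos (fun j _ => mul_pos (hK1pos j k) (h1n j)) Finset.univ_nonempty
  have hS2pos : ∀ k, 0 < S2 k := fun k =>
    Finset.sum_pos (fun l _ => mul_pos (hK2pos k l) (h3n l)) Finset.univ_nonempty
  have hTpos : ∀ j, 0 < T j := fun j =>
    Finset.sum_pos (fun k _ => mul_pos (hK1pos j k) (inv_pos.mpr (h2n' k)))
      Finset.univ_nonempty
  have hSpos : ∀ l, 0 < S l := fun l =>
    Finset.sum_pos (fun k _ => mul_pos (hK2pos k l) (h2n' k)) Finset.univ_nonempty
  have hv2 : ∀ k, u2 (n+1) k = Real.sqrt (S1 k / S2 k) := by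
    intro k
    rw [hrec2]
    simp only [Matrix.mulVec, dotProduct, Matrix.transpose_apply, hS1def, hS2def]
  have hsq : ∀ k, u2 (n+1) k ^ 2 = S1 k / S2 k := by
    intro k
    rw [hv2 k, Real.sq_sqrt (le_of_lt (div_pos (hS1pos k) (hS2pos k)))]
  have hbal : ∀ k, u2 (n+1) k * S2 k = (u2 (n+1) k)⁻¹ * S1 k := by
    intro k
    have h2 := (h2n' k).ne'
    have hs2 := (hS2pos k).ne'
    have hq := hsq k
    field_simp at hq ⊢
    nlinarith [hq]
  have hrid : ∀ k, r n k = u2 n k * (u2 (n+1) k)⁻¹ := by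
    intro k
    rw [hr]
    have e1 : ((indMat2 (u2 n) K2 (u3 n)) *ᵥ fun _ => 1) k = u2 n k * S2 k := by
      simp only [Matrix.mulVec, dotProduct, indMat2_apply_s15, hS2def, mul_one]
      rw [Finset.mul_sum]
      exact Finset.sum_congr rfl fun l _ => by ring
    have e2 : (((indMat1 (u1 n) K1 (u2 n))ᵀ *ᵥ fun _ => 1) k) = (u2 n k)⁻¹ * S1 k := by
      simp only [Matrix.mulVec, dotProduct, Matrix.transpose_apply, indMat1_apply_s15,
        hS1def, mul_one]
      rw [Finset.mul_sum]
      exact Finset.sum_congr rfl fun j _ => by ring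
    simp only [e1, e2]
    have hne1 : u2 n k ≠ 0 := (h2n k).ne'
    have hne2 : S1 k ≠ 0 := (hS1pos k).ne'
    have hne3 : S2 k ≠ 0 := (hS2pos k).ne'
    have harg : u2 n k * S2 k / ((u2 n k)⁻¹ * S1 k) = (u2 n k) ^ 2 * (S1 k / S2 k)⁻¹ := by
      field_simp
    rw [harg, Real.sqrt_mul (sq_nonneg _), Real.sqrt_sq (le_of_lt (h2n k)),
      Real.sqrt_inv, ← hv2 k]
  have hu1' : ∀ j, a j = u1 (n+1) j * T j := by
    intro j
    rw [hrec1]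
    simp only []
    have : (K1 *ᵥ fun k => (u2 (n+1) k)⁻¹) j = T j := by
      simp only [Matrix.mulVec, dotProduct, hTdef]
    rw [this, div_mul_cancel₀ _ (ne_of_gt (hTpos j))]
  have hu3' : ∀ l, b l = u3 (n+1) l * S l := by
    intro l
    rw [hrec3]
    simp only []
    have : (K2ᵀ *ᵥ u2 (n+1)) l = S l := by
      simp only [Matrix.mulVec, dotProduct, Matrix.transpose_apply, hSdef]
    rw [this, div_mul_cancel₀ _ (ne_of_gt (hSpos l))]
  have hRHS1 : ∀ j, (indMat1 (u1 n) K1 (u2 n) *ᵥ r n) j = u1 n j * T j := by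
    intro j
    simp only [Matrix.mulVec, dotProduct, indMat1_apply_s15, hTdef]
    rw [Finset.mul_sum]
    refine Finset.sum_congr rfl fun k _ => ?_
    rw [hrid k]
    have hne1 : u2 n k ≠ 0 := (h2n k).ne'
    field_simp
    try ring
  have hRHS2 : ∀ l, ((indMat2 (u2 n) K2 (u3 n))ᵀ *ᵥ fun k => (r n k)⁻¹) l
      = u3 n l * S l := by
    intro l
    simp only [Matrix.mulVec, dotProduct, Matrix.transpose_apply, indMat2_apply_s15,
      hSdef]
    rw [Finset.mul_sum]
    refine Finset.sum_congr rfl fun k _ => ?_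
    rw [hrid k]
    have hne1 : u2 n k ≠ 0 := (h2n k).ne'
    have hne2 : u2 (n+1) k ≠ 0 := (h2n' k).ne'
    field_simp
    try ring
  have hLHS : ∀ k, (indMat2 (u2 (n+1)) K2 (u3 (n+1)) *ᵥ fun _ => 1) k
      - ((indMat1 (u1 (n+1)) K1 (u2 (n+1)))ᵀ *ᵥ fun _ => 1) k
      = u2 (n+1) k * (∑ l, K2 k l * (u3 (n+1) l - u3 n l))
        - (u2 (n+1) k)⁻¹ * (∑ j, K1 j k * (u1 (n+1) j - u1 n j)) := by
    intro k
    have e1 : (indMat2 (u2 (n+1)) K2 (u3 (n+1)) *ᵥ fun _ => 1) k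
        = u2 (n+1) k * ∑ l, K2 k l * u3 (n+1) l := by
      simp only [Matrix.mulVec, dotProduct, indMat2_apply_s15, mul_one]
      rw [Finset.mul_sum]
      exact Finset.sum_congr rfl fun l _ => by ring
    have e2 : ((indMat1 (u1 (n+1)) K1 (u2 (n+1)))ᵀ *ᵥ fun _ => 1) k
        = (u2 (n+1) k)⁻¹ * ∑ j, K1 j k * u1 (n+1) j := by
      simp only [Matrix.mulVec, dotProduct, Matrix.transpose_apply, indMat1_apply_s15,
        mul_one]
      rw [Finset.mul_sum]
      exact Finset.sum_congr rfl fun j _ => by ring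
    rw [e1, e2]
    have es1 : ∑ l, K2 k l * (u3 (n+1) l - u3 n l)
        = (∑ l, K2 k l * u3 (n+1) l) - S2 k := by
      rw [hS2def, ← Finset.sum_sub_distrib]
      exact Finset.sum_congr rfl fun l _ => by ring
    have es2 : ∑ j, K1 j k * (u1 (n+1) j - u1 n j)
        = (∑ j, K1 j k * u1 (n+1) j) - S1 k := by
      rw [hS1def, ← Finset.sum_sub_distrib]
      exact Finset.sum_congr rfl fun j _ => by ring
    rw [es1, es2]
    linear_combination hbal k
  calc (∑ k, |(indMat2 (u2 (n+1)) K2 (u3 (n+1)) *ᵥ fun _ => 1) k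
          - ((indMat1 (u1 (n+1)) K1 (u2 (n+1)))ᵀ *ᵥ fun _ => 1) k|)
      ≤ ∑ k, ((u2 (n+1) k)⁻¹ * ∑ j, K1 j k * |u1 (n+1) j - u1 n j|
          + u2 (n+1) k * ∑ l, K2 k l * |u3 (n+1) l - u3 n l|) := by
        apply Finset.sum_le_sum
        intro k _
        rw [hLHS k]
        have habs : |u2 (n+1) k * (∑ l, K2 k l * (u3 (n+1) l - u3 n l))
            - (u2 (n+1) k)⁻¹ * (∑ j, K1 j k * (u1 (n+1) j - u1 n j))|
            ≤ |u2 (n+1) k * (∑ l, K2 k l * (u3 (n+1) l - u3 n l))|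
              + |(u2 (n+1) k)⁻¹ * (∑ j, K1 j k * (u1 (n+1) j - u1 n j))| :=
          abs_sub _ _
        refine habs.trans ?_
        rw [abs_mul, abs_mul, abs_of_pos (h2n' k), abs_of_pos (inv_pos.mpr (h2n' k))]
        have b1 : |∑ l, K2 k l * (u3 (n+1) l - u3 n l)|
            ≤ ∑ l, K2 k l * |u3 (n+1) l - u3 n l| := by
          refine (Finset.abs_sum_le_sum_abs _ _).trans ?_
          exact Finset.sum_le_sum fun l _ => by
            rw [abs_mul, abs_of_pos (hK2pos k l)]
        have b2 : |∑ j, K1 j k * (u1 (n+1) j - u1 n j)|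
            ≤ ∑ j, K1 j k * |u1 (n+1) j - u1 n j| := by
          refine (Finset.abs_sum_le_sum_abs _ _).trans ?_
          exact Finset.sum_le_sum fun j _ => by
            rw [abs_mul, abs_of_pos (hK1pos j k)]
        have c1 := mul_le_mul_of_nonneg_left b1 (le_of_lt (h2n' k))
        have c2 := mul_le_mul_of_nonneg_left b2 (le_of_lt (inv_pos.mpr (h2n' k)))
        linarith
    _ = (∑ j, |a j - (indMat1 (u1 n) K1 (u2 n) *ᵥ r n) j|)
          + ∑ l, |b l - ((indMat2 (u2 n) K2 (u3 n))ᵀ *ᵥ fun k => (r n k)⁻¹) l| := by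
        rw [Finset.sum_add_distrib]
        congr 1
        · have goal1 : ∀ j, |a j - (indMat1 (u1 n) K1 (u2 n) *ᵥ r n) j|
              = |u1 (n+1) j - u1 n j| * T j := by
            intro j
            rw [hRHS1 j, hu1' j, ← sub_mul, abs_mul, abs_of_pos (hTpos j)]
          rw [Finset.sum_congr rfl fun j _ => goal1 j]
          simp only [Finset.mul_sum]
          rw [Finset.sum_comm]
          refine Finset.sum_congr rfl fun j _ => ?_
          rw [hTdef, Finset.mul_sum]
          exact Finset.sum_congr rfl fun k _ => by ring
        · have goal2 : ∀ l, |b l - ((indMat2 (u2 n) K2 (u3 n))ᵀ *ᵥ fun k => (r n k)⁻¹) l|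
              = |u3 (n+1) l - u3 n l| * S l := by
            intro l
            rw [hRHS2 l, hu3' l, ← sub_mul, abs_mul, abs_of_pos (hSpos l)]
          rw [Finset.sum_congr rfl fun l _ => goal2 l]
          simp only [Finset.mul_sum]
          rw [Finset.sum_comm]
          refine Finset.sum_congr rfl fun l _ => ?_
          rw [hSdef, Finset.mul_sum]
          exact Finset.sum_congr rfl fun k _ => by ring
end
end

section
/- Rounding to a feasible transportation plan: let P ∈ ℝ_{≥0}^{m×n}, and let a ∈ ℝ_{≥0}^m and b ∈ ℝ_{≥0}^n be probability vectors (entries summing to 1). Then there exists P̃ ∈ ℝ_{≥0}^{m×n} with P̃1_n = a and P̃ᵀ1_m = b such that ‖P − P̃‖₁ ≤ 2(‖P1_n − a‖₁ + ‖Pᵀ1_m − b‖₁). -/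
open Matrix Finset

/-!
Scale every row of `P` down to mass at most `a i`, then every column of the result down to
mass at most `b j`; the matrix `Y` obtained is dominated by `P` and has row sums `≤ a` and
column sums `≤ b`. The missing masses `e = a - Y 1` and `f = b - Yᵀ 1` have the same total `Δ`,
and `Y + e fᵀ / Δ` is a feasible plan above `Y`. Hence `‖P - P̃‖₁ ≤ ‖P - Y‖₁ + ‖P̃ - Y‖₁`,
and the two scalings lose at most `‖P 1 - a‖₁` and `‖Pᵀ 1 - b‖₁` in mass.
-/

lemma min_one_div_mul_self {s t : ℝ} (hs : 0 ≤ s) (ht : 0 ≤ t) : min 1 (t / s) * s = min s t := by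
  rcases hs.eq_or_lt with rfl | hs
  · simp [ht]
  · rw [min_mul_of_nonneg _ _ hs.le, one_mul, div_mul_cancel₀ _ hs.ne']

lemma add_sub_two_mul_min (s t : ℝ) : s + t - 2 * min s t = |s - t| := by
  rcases le_total s t with h | h
  · rw [min_eq_left h, abs_of_nonpos (sub_nonpos.2 h)]; ring
  · rw [min_eq_right h, abs_of_nonneg (sub_nonneg.2 h)]; ring

lemma sub_min_le_abs_sub {s s' t : ℝ} (hs : s ≤ s') : s - min s t ≤ |s' - t| := by
  rcases le_total s t with h | h
  · rw [min_eq_left h, sub_self]; exact abs_nonneg _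
  · rw [min_eq_right h]; exact (sub_le_sub_right hs t).trans (le_abs_self _)

section Rounding

variable {ι κ : Type*}

lemma sum_mul_div_sum_eq [Fintype ι] [Fintype κ] {e : ι → ℝ} {f : κ → ℝ} (he : ∀ i, 0 ≤ e i)
    (hef : ∑ j, f j = ∑ i, e i) (i : ι) : ∑ j, e i * f j / ∑ i', e i' = e i := by
  rcases eq_or_ne (∑ i', e i') 0 with hΔ | hΔ
  · rw [(sum_eq_zero_iff_of_nonneg fun i _ => he i).1 hΔ i (mem_univ i)]
    simp
  · rw [← sum_div, ← mul_sum, hef, mul_div_cancel_right₀ _ hΔ]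

lemma exists_le_of_sum_le [Fintype ι] [Fintype κ] {Y : Matrix ι κ ℝ} {a : ι → ℝ} {b : κ → ℝ}
    (hrow : ∀ i, ∑ j, Y i j ≤ a i) (hcol : ∀ j, ∑ i, Y i j ≤ b j) (hab : ∑ i, a i = ∑ j, b j) :
    ∃ Q : Matrix ι κ ℝ, (∀ i j, Y i j ≤ Q i j) ∧ (∀ i, ∑ j, Q i j = a i) ∧
      (∀ j, ∑ i, Q i j = b j) := by
  set e : ι → ℝ := fun i => a i - ∑ j, Y i j
  set f : κ → ℝ := fun j => b j - ∑ i, Y i j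
  have he : ∀ i, 0 ≤ e i := fun i => sub_nonneg.2 (hrow i)
  have hf : ∀ j, 0 ≤ f j := fun j => sub_nonneg.2 (hcol j)
  have hef : ∑ j, f j = ∑ i, e i := by
    simp only [e, f, sum_sub_distrib, hab]
    rw [sum_comm]
  refine ⟨of fun i j => Y i j + e i * f j / ∑ i', e i', fun i j => ?_, fun i => ?_, fun j => ?_⟩
  · exact le_add_of_nonneg_right <|
      div_nonneg (mul_nonneg (he i) (hf j)) (sum_nonneg fun i _ => he i)
  · simp only [of_apply, sum_add_distrib, sum_mul_div_sum_eq he hef, e]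
    ring
  · have hfe : ∀ i, e i * f j / ∑ i', e i' = f j * e i / ∑ j', f j' := fun i => by
      rw [hef, mul_comm]
    simp only [of_apply, sum_add_distrib, hfe, sum_mul_div_sum_eq hf hef.symm, f]
    ring

lemma sum_abs_sub_le_of_le_s16 [Fintype ι] [Fintype κ] {P Q Y : Matrix ι κ ℝ}
    (hYP : ∀ i j, Y i j ≤ P i j) (hYQ : ∀ i j, Y i j ≤ Q i j) :
    ∑ i, ∑ j, |P i j - Q i j| ≤ ∑ i, ∑ j, P i j + ∑ i, ∑ j, Q i j - 2 * ∑ i, ∑ j, Y i j := by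
  simp only [mul_sum, ← sum_add_distrib, ← sum_sub_distrib]
  gcongr with i _ j _
  have := hYP i j
  have := hYQ i j
  exact abs_sub_le_iff.2 ⟨by linarith, by linarith⟩

noncomputable def capRows [Fintype κ] (P : Matrix ι κ ℝ) (a : ι → ℝ) : Matrix ι κ ℝ :=
  of fun i j => min 1 (a i / ∑ j', P i j') * P i j

noncomputable def capCols [Fintype ι] (P : Matrix ι κ ℝ) (b : κ → ℝ) : Matrix ι κ ℝ :=
  (capRows Pᵀ b)ᵀ

variable {P : Matrix ι κ ℝ} {a : ι → ℝ} {b : κ → ℝ}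

lemma capRows_nonneg [Fintype κ] (hP : ∀ i j, 0 ≤ P i j) (ha : ∀ i, 0 ≤ a i) (i : ι) (j : κ) :
    0 ≤ capRows P a i j :=
  mul_nonneg (le_min zero_le_one (div_nonneg (ha i) (sum_nonneg fun j _ => hP i j))) (hP i j)

lemma capRows_le [Fintype κ] (hP : ∀ i j, 0 ≤ P i j) (i : ι) (j : κ) : capRows P a i j ≤ P i j :=
  mul_le_of_le_one_left (hP i j) (min_le_left _ _)

lemma sum_capRows [Fintype κ] (hP : ∀ i j, 0 ≤ P i j) (ha : ∀ i, 0 ≤ a i) (i : ι) :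
    ∑ j, capRows P a i j = min (∑ j, P i j) (a i) := by
  simp only [capRows, of_apply, ← mul_sum]
  exact min_one_div_mul_self (sum_nonneg fun j _ => hP i j) (ha i)

lemma capCols_nonneg [Fintype ι] (hP : ∀ i j, 0 ≤ P i j) (hb : ∀ j, 0 ≤ b j) (i : ι) (j : κ) :
    0 ≤ capCols P b i j :=
  capRows_nonneg (fun j i => hP i j) hb j i

lemma capCols_le [Fintype ι] (hP : ∀ i j, 0 ≤ P i j) (i : ι) (j : κ) : capCols P b i j ≤ P i j :=
  capRows_le (fun j i => hP i j) j i

lemma sum_capCols [Fintype ι] (hP : ∀ i j, 0 ≤ P i j) (hb : ∀ j, 0 ≤ b j) (j : κ) :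
    ∑ i, capCols P b i j = min (∑ i, P i j) (b j) :=
  sum_capRows (fun j i => hP i j) hb j

/-- The row scaling loses exactly the excess row mass, the column scaling at most the excess
column mass of `P`. -/
lemma sum_add_sum_sub_two_mul_sum_capCols_capRows_le [Fintype ι] [Fintype κ] (hP : ∀ i j, 0 ≤ P i j)
    (ha : ∀ i, 0 ≤ a i) (hb : ∀ j, 0 ≤ b j) :
    ∑ i, ∑ j, P i j + ∑ i, a i - 2 * ∑ i, ∑ j, capCols (capRows P a) b i j ≤
      ∑ i, |∑ j, P i j - a i| + 2 * ∑ j, |∑ i, P i j - b j| := by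
  set X := capRows P a
  have hX : ∀ i j, 0 ≤ X i j := capRows_nonneg hP ha
  have row_loss : ∑ i, ∑ j, P i j + ∑ i, a i - 2 * ∑ i, ∑ j, X i j =
      ∑ i, |∑ j, P i j - a i| := by
    simp only [X, sum_capRows hP ha, ← add_sub_two_mul_min, mul_sum, ← sum_add_distrib,
      ← sum_sub_distrib]
  have col_loss : ∑ i, ∑ j, X i j - ∑ i, ∑ j, capCols X b i j ≤ ∑ j, |∑ i, P i j - b j| := by
    rw [sum_comm (f := fun i j => X i j), sum_comm (f := fun i j => capCols X b i j),
      ← sum_sub_distrib]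
    gcongr with j _
    rw [sum_capCols hX hb]
    exact sub_min_le_abs_sub (sum_le_sum fun i _ => capRows_le hP i j)
  linarith

end Rounding

/-- **Rounding to a feasible transportation plan** (Altschuler–Weed–Rigollet).
Given a nonnegative matrix `P` and probability vectors `a`, `b`, there is a nonnegative
matrix `P̃` with row sums `a` and column sums `b` such that
`‖P − P̃‖₁ ≤ 2(‖P1 − a‖₁ + ‖Pᵀ1 − b‖₁)`. -/
theorem rounding_to_feasible_plan
    (m n : ℕ) (P : Matrix (Fin m) (Fin n) ℝ) (hP : ∀ i j, 0 ≤ P i j)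
    (a : Fin m → ℝ) (b : Fin n → ℝ)
    (ha : ∀ i, 0 ≤ a i) (hb : ∀ j, 0 ≤ b j)
    (hasum : ∑ i, a i = 1) (hbsum : ∑ j, b j = 1) :
    ∃ Pt : Matrix (Fin m) (Fin n) ℝ,
      (∀ i j, 0 ≤ Pt i j) ∧
      (Pt *ᵥ fun _ => 1) = a ∧
      (Ptᵀ *ᵥ fun _ => 1) = b ∧
      (∑ i, ∑ j, |P i j - Pt i j|) ≤
        2 * ((∑ i, |(P *ᵥ fun _ => 1) i - a i|) + (∑ j, |(Pᵀ *ᵥ fun _ => 1) j - b j|)) := by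
  set X := capRows P a
  set Y := capCols X b
  have hX : ∀ i j, 0 ≤ X i j := capRows_nonneg hP ha
  have hYP : ∀ i j, Y i j ≤ P i j := fun i j => (capCols_le hX i j).trans (capRows_le hP i j)
  have hrow : ∀ i, ∑ j, Y i j ≤ a i := fun i =>
    calc ∑ j, Y i j ≤ ∑ j, X i j := sum_le_sum fun j _ => capCols_le hX i j
      _ = min (∑ j, P i j) (a i) := sum_capRows hP ha i
      _ ≤ a i := min_le_right _ _
  have hcol : ∀ j, ∑ i, Y i j ≤ b j := fun j => (sum_capCols hX hb j).trans_le (min_le_right _ _)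
  obtain ⟨Q, hYQ, hQrow, hQcol⟩ := exists_le_of_sum_le hrow hcol (hasum.trans hbsum.symm)
  refine ⟨Q, fun i j => (capCols_nonneg hX hb i j).trans (hYQ i j), ?_, ?_, ?_⟩
  · ext i; simpa [mulVec, dotProduct] using hQrow i
  · ext j; simpa [mulVec, dotProduct] using hQcol j
  simp only [mulVec, dotProduct, transpose_apply, mul_one]
  calc ∑ i, ∑ j, |P i j - Q i j|
      ≤ ∑ i, ∑ j, P i j + ∑ i, ∑ j, Q i j - 2 * ∑ i, ∑ j, Y i j := sum_abs_sub_le_of_le_s16 hYP hYQ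
    _ = ∑ i, ∑ j, P i j + ∑ i, a i - 2 * ∑ i, ∑ j, Y i j := by simp only [hQrow]
    _ ≤ ∑ i, |∑ j, P i j - a i| + 2 * ∑ j, |∑ i, P i j - b j| :=
      sum_add_sum_sub_two_mul_sum_capCols_capRows_le hP ha hb
    _ ≤ _ := by linarith [sum_nonneg fun i (_ : i ∈ univ) => abs_nonneg (∑ j, P i j - a i)]
end
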